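/- arXiv:2411.15724 — 5 statements merged into one kernel-verified Lean document; each statement's English description precedes it below -/
import Mathlib

section
/- Let φ be the characteristic function of an integer-valued random variable X and let 0 < β ≤ 2. The following assertions are equivalent: (i) there exists c > 0 such that |1−φ(x)| ≥ c|x|^β for all x in some open neighborhood of 0; (ii) there exist a positive integer d and c' > 0 such that |1−φ(2πx)| ≥ c'‖dx‖^β for all real x; (iii) there exist a positive integer d and c' > 0 such that |1−φ(2πx)| ≥ c'|φ(2πx)|·‖dx‖^β for all real x. -/
/-!
Put `ψ(x) = φ(2πx)`. If `φ(y) = 1` then `e^{iyX} = 1` almost surely, so the points where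
`ψ = 1` are exactly the periods of `ψ`; they form an additive subgroup of `ℝ` containing `1`.
A lower bound `c|x|^β ≤ |1 - ψ(x)|` near `0` isolates `0` in this subgroup, which is therefore
`(1/d)ℤ`. Every `x` is congruent modulo `1/d` to some `t` with `|t| ≤ 1/(2d)` and `‖dx‖ = d|t|`;
for small `|t|` the local bound applies, and on the compact rest of `[-1/(2d), 1/(2d)]` the
function `1 - ψ` has no zero. Conversely `‖dx‖ = d|x|` near `0`. Finally the factor `|φ|` in
(iii) only matters where `|φ| ≥ 1/2`, since elsewhere `|1 - φ| ≥ 1/2`.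
-/

open MeasureTheory ProbabilityTheory Filter Finset Real
open scoped ENNReal

noncomputable section

/-- Distance from a real number `x` to the nearest integer: the norm of its image
on the torus `𝕋 = ℝ/ℤ`. -/
def torusNorm (x : ℝ) : ℝ := ‖(x : UnitAddCircle)‖

/-- The set of couplings of two Borel measures on the torus. -/
def couplings (ν₀ ν₁ : Measure UnitAddCircle) : Set (Measure (UnitAddCircle × UnitAddCircle)) :=
  {γ | γ.map Prod.fst = ν₀ ∧ γ.map Prod.snd = ν₁}

/-- The `L^p`-Wasserstein distance between two Borel measures on the torus. -/
def wassersteinDist (p : ℝ) (ν₀ ν₁ : Measure UnitAddCircle) : ℝ :=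
  sInf ((fun γ => (∫ z, dist z.1 z.2 ^ p ∂γ) ^ (1 / p)) '' couplings ν₀ ν₁)

/-- The empirical measure `μ_n = (1/n) ∑_{j=1}^n δ_{{S_j α}}` on the torus,
for a given path `S : ℕ → ℤ` of the random walk. -/
def empiricalMeasure (α : ℝ) (S : ℕ → ℤ) (n : ℕ) : Measure UnitAddCircle :=
  (n : ℝ≥0∞)⁻¹ • ∑ j ∈ Finset.range n, Measure.dirac (((S (j + 1) : ℝ) * α : ℝ) : UnitAddCircle)

/-- The expected `L^p`-Wasserstein distance `E[W_p(μ_n, μ)]` between the empirical measure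
of the random walk `S_j = X_1 + ⋯ + X_j` (mod 1, rotated by `α`) and the uniform
distribution `μ` on the torus. -/
def expWassersteinEmp {Ω : Type*} [MeasurableSpace Ω] (P : Measure Ω) (X : ℕ → Ω → ℤ)
    (α : ℝ) (p : ℝ) (n : ℕ) : ℝ :=
  ∫ ω, wassersteinDist p (empiricalMeasure α (fun j => ∑ i ∈ Finset.range j, X i ω) n) volume ∂P

open Function

def Function.periodAddSubgroup {α : Type*} (f : ℝ → α) : AddSubgroup ℝ where
  carrier := {p | Periodic f p}
  zero_mem' := fun x => by simp
  add_mem' := fun ha hb => ha.add_period hb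
  neg_mem' := fun ha => ha.neg

@[simp]
lemma Function.mem_periodAddSubgroup {α : Type*} {f : ℝ → α} {p : ℝ} :
    p ∈ periodAddSubgroup f ↔ Periodic f p :=
  Iff.rfl

lemma ae_eq_one_of_integral_eq_one {Ω : Type*} [MeasurableSpace Ω] {P : Measure Ω}
    [IsProbabilityMeasure P] {f : Ω → ℂ} (hf : Integrable f P) (hle : ∀ᵐ ω ∂P, ‖f ω‖ ≤ 1)
    (h : ∫ ω, f ω ∂P = 1) : f =ᵐ[P] 1 := by
  have hfre : Integrable (fun ω => (f ω).re) P := hf.re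
  have hre : ∫ ω, (1 - (f ω).re) ∂P = 0 := by
    have hint := integral_re hf
    simp only [RCLike.re_to_complex] at hint
    rw [integral_sub (integrable_const 1) hfre, hint, h]
    simp
  have hre_ae : ∀ᵐ ω ∂P, 1 - (f ω).re = 0 :=
    (integral_eq_zero_iff_of_nonneg_ae
      (hle.mono fun ω hω => sub_nonneg.2 ((Complex.re_le_norm _).trans hω))
      ((integrable_const 1).sub hfre)).1 hre
  filter_upwards [hle, hre_ae] with ω hnorm hreω
  have h1 : (f ω).re = 1 := by linarith
  have h2 : (f ω).im = 0 := by
    have hsq := Complex.sq_norm_sub_sq_re (f ω)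
    nlinarith [norm_nonneg (f ω), sq_nonneg (f ω).im]
  exact Complex.ext h1 h2

lemma charFun_add_of_charFun_eq_one {E : Type*} [NormedAddCommGroup E] [InnerProductSpace ℝ E]
    [MeasurableSpace E] [OpensMeasurableSpace E] {μ : Measure E} [IsProbabilityMeasure μ]
    {y : E} (hy : charFun μ y = 1) (t : E) :
    charFun μ (y + t) = charFun μ t := by
  have hae : (fun x => Complex.exp (inner ℝ x y * Complex.I)) =ᵐ[μ] 1 :=
    ae_eq_one_of_integral_eq_one ((BoundedContinuousFunction.innerProbChar y).integrable μ)
      (ae_of_all _ fun x => by simp [Complex.norm_exp_ofReal_mul_I]) hy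
  rw [charFun_apply, charFun_apply]
  refine integral_congr_ae (hae.mono fun x hx => ?_)
  simp only [Pi.one_apply] at hx ⊢
  rw [inner_add_right, Complex.ofReal_add, add_mul, Complex.exp_add, hx, one_mul]

lemma charFun_map_intCast {Ω : Type*} [MeasurableSpace Ω] {P : Measure Ω} {X : Ω → ℤ}
    (hX : Measurable X) (x : ℝ) :
    charFun (P.map fun ω => (X ω : ℝ)) x = ∫ ω, Complex.exp (Complex.I * x * (X ω : ℂ)) ∂P := by
  rw [charFun_apply_real, integral_map (by fun_prop) (by fun_prop)]
  congr 1 with ω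
  push_cast
  ring_nf

lemma charFun_map_intCast_two_pi {Ω : Type*} [MeasurableSpace Ω] {P : Measure Ω}
    [IsProbabilityMeasure P] {X : Ω → ℤ} (hX : Measurable X) :
    charFun (P.map fun ω => (X ω : ℝ)) (2 * π) = 1 := by
  have h : ∀ ω, Complex.exp (Complex.I * ((2 * π : ℝ) : ℂ) * (X ω : ℂ)) = 1 := fun ω => by
    rw [← Complex.exp_int_mul_two_pi_mul_I (X ω)]
    push_cast
    ring_nf
  rw [charFun_map_intCast hX]
  simp_rw [h]
  simp

lemma torusNorm_eq_abs_sub_round (x : ℝ) : torusNorm x = |x - round x| := UnitAddCircle.norm_eq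

lemma torusNorm_le_half (x : ℝ) : torusNorm x ≤ 1 / 2 :=
  (torusNorm_eq_abs_sub_round x).trans_le (abs_sub_round x)

lemma eventually_torusNorm_eq_abs : ∀ᶠ x in nhds 0, torusNorm x = |x| := by
  filter_upwards [eventually_abs_sub_lt 0 (by norm_num : (0 : ℝ) < 1 / 2)] with x hx
  rw [sub_zero] at hx
  exact (AddCircle.norm_coe_eq_abs_iff (p := (1 : ℝ)) one_ne_zero).2 (by simpa using hx.le)

lemma exists_torusNorm_mul_eq_mul_abs_sub {d : ℝ} (hd : 0 < d) (x : ℝ) :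
    ∃ k : ℤ, torusNorm (d * x) = d * |x - k • d⁻¹| ∧ |x - k • d⁻¹| ≤ (2 * d)⁻¹ := by
  have hdx : d * x - round (d * x) = d * (x - round (d * x) • d⁻¹) := by
    rw [zsmul_eq_mul]; field_simp
  refine ⟨round (d * x), ?_, ?_⟩
  · rw [torusNorm_eq_abs_sub_round, hdx, abs_mul, abs_of_pos hd]
  · have h := abs_sub_round (d * x)
    rw [hdx, abs_mul, abs_of_pos hd] at h
    calc |x - round (d * x) • d⁻¹| = d⁻¹ * (d * |x - round (d * x) • d⁻¹|) := by field_simp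
      _ ≤ d⁻¹ * (1 / 2) := by gcongr
      _ = (2 * d)⁻¹ := by ring

lemma exists_pos_mul_abs_rpow_le {f : ℝ → ℝ} (hf : Continuous f) {c β R : ℝ} (hc : 0 < c)
    (hloc : ∀ᶠ t in nhds 0, c * |t| ^ β ≤ f t) (hpos : ∀ t, t ≠ 0 → |t| ≤ R → 0 < f t) :
    ∃ c' : ℝ, 0 < c' ∧ ∀ t, |t| ≤ R → c' * |t| ^ β ≤ f t := by
  obtain ⟨r, hr, hball⟩ := Metric.eventually_nhds_iff.1 hloc
  set K := {t : ℝ | r ≤ |t| ∧ |t| ≤ R}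
  have hK : IsCompact K := isCompact_Icc.of_isClosed_subset
    ((isClosed_le continuous_const continuous_abs).inter
      (isClosed_le continuous_abs continuous_const)) fun t ht => abs_le.1 ht.2
  have hpow : ∀ t ∈ K, 0 < |t| ^ β := fun t ht => rpow_pos_of_pos (hr.trans_le ht.1) β
  obtain ⟨m, hm, hmK⟩ := hK.exists_forall_le' (f := fun t => f t / |t| ^ β) (a := 0)
    (hf.continuousOn.div (continuous_abs.continuousOn.rpow_const fun t ht =>
      Or.inl (hr.trans_le ht.1).ne') fun t ht => (hpow t ht).ne')
    fun t ht => div_pos (hpos t (abs_pos.1 (hr.trans_le ht.1)) ht.2) (hpow t ht)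
  refine ⟨min c m, lt_min hc hm, fun t ht => ?_⟩
  rcases lt_or_ge |t| r with htr | htr
  · exact (mul_le_mul_of_nonneg_right (min_le_left _ _) (rpow_nonneg (abs_nonneg t) _)).trans
      (hball (by simpa using htr))
  · have hmt := hmK t ⟨htr, ht⟩
    rw [le_div_iff₀ (hpow t ⟨htr, ht⟩)] at hmt
    exact (mul_le_mul_of_nonneg_right (min_le_right _ _) (rpow_nonneg (abs_nonneg t) _)).trans hmt

lemma Filter.Eventually.mul_abs_rpow_le_comp_mul {g : ℝ → ℝ} {c β : ℝ}
    (h : ∀ᶠ x in nhds 0, c * |x| ^ β ≤ g x) (s : ℝ) :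
    ∀ᶠ x in nhds 0, c * |s| ^ β * |x| ^ β ≤ g (s * x) := by
  have hs : Tendsto (fun x => s * x) (nhds 0) (nhds 0) := by
    simpa using (tendsto_id (x := nhds (0 : ℝ))).const_mul s
  filter_upwards [hs.eventually h] with x hx
  rwa [abs_mul, mul_rpow (abs_nonneg s) (abs_nonneg x), ← mul_assoc] at hx

lemma eventually_mul_abs_rpow_le_of_torusNorm {f : ℝ → ℝ} {c d β : ℝ}
    (h : ∀ x, c * torusNorm (d * x) ^ β ≤ f x) :
    ∀ᶠ x in nhds 0, c * |d| ^ β * |x| ^ β ≤ f x := by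
  have hd : Tendsto (fun x => d * x) (nhds 0) (nhds 0) := by
    simpa using (tendsto_id (x := nhds (0 : ℝ))).const_mul d
  filter_upwards [hd.eventually eventually_torusNorm_eq_abs] with x hx
  rw [mul_assoc, ← mul_rpow (abs_nonneg d) (abs_nonneg x), ← abs_mul, ← hx]
  exact h x

lemma AddSubgroup.exists_eq_zmultiples_inv_natCast {G : AddSubgroup ℝ} (h1 : (1 : ℝ) ∈ G)
    {r : ℝ} (hr : 0 < r) (hG : Disjoint (G : Set ℝ) (Set.Ioo 0 r)) :
    ∃ d : ℕ, 0 < d ∧ G = AddSubgroup.zmultiples (d : ℝ)⁻¹ := by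
  obtain ⟨b, rfl⟩ := AddSubgroup.cyclic_of_isolated_zero hr hG
  rw [← AddSubgroup.zmultiples_eq_closure] at h1 ⊢
  obtain ⟨m, hm⟩ := AddSubgroup.mem_zmultiples_iff.1 h1
  rw [zsmul_eq_mul] at hm
  have hm0 : m ≠ 0 := by rintro rfl; simp at hm
  have hb : b = (m : ℝ)⁻¹ := (eq_inv_of_mul_eq_one_right hm)
  obtain ⟨n, rfl | rfl⟩ := Int.eq_nat_or_neg m
  · exact ⟨n, by omega, by rw [hb, Int.cast_natCast]⟩
  · exact ⟨n, by omega, by rw [hb, Int.cast_neg, Int.cast_natCast, inv_neg,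
      AddSubgroup.zmultiples_neg]⟩

theorem exists_torusNorm_rpow_le_of_eventually {ψ : ℝ → ℂ} (hψ : Continuous ψ) (h0 : ψ 0 = 1)
    (h1 : Periodic ψ 1) (hper : ∀ a, ψ a = 1 → Periodic ψ a) {c β : ℝ}
    (hc : 0 < c) (hloc : ∀ᶠ x in nhds 0, c * |x| ^ β ≤ ‖1 - ψ x‖) :
    ∃ d : ℕ, 0 < d ∧ ∃ c' : ℝ, 0 < c' ∧ ∀ x, c' * torusNorm (d * x) ^ β ≤ ‖1 - ψ x‖ := by
  have hmem : ∀ a, a ∈ periodAddSubgroup ψ ↔ ψ a = 1 :=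
    fun a => ⟨fun ha => by simpa [h0] using ha 0, hper a⟩
  obtain ⟨r, hr, hball⟩ := Metric.eventually_nhds_iff.1 hloc
  have hisol : Disjoint (periodAddSubgroup ψ : Set ℝ) (Set.Ioo 0 r) :=
    Set.disjoint_left.2 fun a ha har => by
      have hca := hball (show dist a 0 < r by simpa [abs_of_pos har.1] using har.2)
      rw [(hmem a).1 ha, sub_self, norm_zero] at hca
      exact (mul_pos hc (rpow_pos_of_pos (abs_pos.2 har.1.ne') β)).not_ge hca
  obtain ⟨d, hd, hG⟩ := AddSubgroup.exists_eq_zmultiples_inv_natCast h1 hr hisol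
  have hd' : (0 : ℝ) < d := Nat.cast_pos.2 hd
  have hpos : ∀ t, t ≠ 0 → |t| ≤ (2 * (d : ℝ))⁻¹ → 0 < ‖1 - ψ t‖ := by
    intro t ht htd
    rw [norm_pos_iff, sub_ne_zero, ne_comm, Ne, ← hmem, hG, AddSubgroup.mem_zmultiples_iff]
    rintro ⟨k, rfl⟩
    have hk : (1 : ℝ) ≤ |(k : ℝ)| := by
      rw [← Int.cast_abs]; exact_mod_cast Int.one_le_abs (by rintro rfl; simp at ht)
    rw [zsmul_eq_mul, abs_mul, abs_inv, abs_of_pos hd', mul_inv] at htd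
    have hkd := mul_le_mul_of_nonneg_right hk (inv_nonneg.2 hd'.le)
    linarith [inv_pos.2 hd']
  obtain ⟨c', hc', hbound⟩ := exists_pos_mul_abs_rpow_le (f := fun t => ‖1 - ψ t‖) (by fun_prop)
    hc hloc hpos
  refine ⟨d, hd, c' / d ^ β, div_pos hc' (rpow_pos_of_pos hd' β), fun x => ?_⟩
  obtain ⟨k, htn, ht⟩ := exists_torusNorm_mul_eq_mul_abs_sub hd' x
  have hk : k • (d : ℝ)⁻¹ ∈ periodAddSubgroup ψ := hG ▸ AddSubgroup.zsmul_mem_zmultiples _ k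
  have hψx : ψ x = ψ (x - k • (d : ℝ)⁻¹) := by
    simpa using mem_periodAddSubgroup.1 hk (x - k • (d : ℝ)⁻¹)
  calc c' / d ^ β * torusNorm (d * x) ^ β = c' * |x - k • (d : ℝ)⁻¹| ^ β := by
        rw [htn, mul_rpow hd'.le (abs_nonneg _)]; field_simp
    _ ≤ ‖1 - ψ x‖ := hψx ▸ hbound _ ht

lemma exists_mul_le_norm_one_sub_iff {ι : Type*} {ψ : ι → ℂ} {g : ι → ℝ}
    (hψ : ∀ i, ‖ψ i‖ ≤ 1) (hg0 : ∀ i, 0 ≤ g i) (hg1 : ∀ i, g i ≤ 1) :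
    (∃ c : ℝ, 0 < c ∧ ∀ i, c * g i ≤ ‖1 - ψ i‖) ↔
      ∃ c : ℝ, 0 < c ∧ ∀ i, c * ‖ψ i‖ * g i ≤ ‖1 - ψ i‖ := by
  constructor
  · rintro ⟨c, hc, h⟩
    refine ⟨c, hc, fun i => le_trans ?_ (h i)⟩
    gcongr
    exacts [hg0 i, mul_le_of_le_one_right hc.le (hψ i)]
  · rintro ⟨c, hc, h⟩
    refine ⟨min (c / 2) (1 / 2), by positivity, fun i => ?_⟩
    rcases le_or_gt (1 / 2) ‖ψ i‖ with hψi | hψi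
    · refine le_trans ?_ (h i)
      gcongr
      · exact hg0 i
      · nlinarith [min_le_left (c / 2) (1 / 2)]
    · have : 1 - ‖ψ i‖ ≤ ‖1 - ψ i‖ := by simpa using norm_sub_norm_le (1 : ℂ) (ψ i)
      nlinarith [min_le_right (c / 2) (1 / 2), hg0 i, hg1 i]

theorem charFun_lower_bound_equivalences_general
    {Ω : Type*} [MeasurableSpace Ω] (P : Measure Ω) [IsProbabilityMeasure P]
    (X : Ω → ℤ) (hmeas : Measurable X)
    (φ : ℝ → ℂ)
    (hφ : ∀ x : ℝ, φ x = ∫ ω, Complex.exp (Complex.I * x * (X ω : ℂ)) ∂P)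
    (β : ℝ) (hβ0 : 0 < β) :
    ((∃ c : ℝ, 0 < c ∧ ∃ U ∈ nhds (0 : ℝ), ∀ x ∈ U, c * |x| ^ β ≤ ‖1 - φ x‖) ↔
      (∃ d : ℕ, 0 < d ∧ ∃ c' : ℝ, 0 < c' ∧
        ∀ x : ℝ, c' * torusNorm ((d : ℝ) * x) ^ β ≤ ‖1 - φ (2 * π * x)‖)) ∧
    ((∃ d : ℕ, 0 < d ∧ ∃ c' : ℝ, 0 < c' ∧
        ∀ x : ℝ, c' * torusNorm ((d : ℝ) * x) ^ β ≤ ‖1 - φ (2 * π * x)‖) ↔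
      (∃ d : ℕ, 0 < d ∧ ∃ c' : ℝ, 0 < c' ∧
        ∀ x : ℝ, c' * ‖φ (2 * π * x)‖ * torusNorm ((d : ℝ) * x) ^ β ≤ ‖1 - φ (2 * π * x)‖)) := by
  set μ : Measure ℝ := P.map fun ω => (X ω : ℝ)
  have : IsProbabilityMeasure μ := Measure.isProbabilityMeasure_map (by fun_prop)
  obtain rfl : φ = charFun μ := funext fun x => (hφ x).trans (charFun_map_intCast hmeas x).symm
  set ψ : ℝ → ℂ := fun x => charFun μ (2 * π * x)
  have hper : ∀ a, ψ a = 1 → Periodic ψ a := fun a ha x => by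
    simpa [ψ, mul_add, add_comm] using charFun_add_of_charFun_eq_one ha (2 * π * x)
  have hψ1 : Periodic ψ 1 := hper 1 (by simpa [ψ] using charFun_map_intCast_two_pi hmeas)
  simp only [← eventually_iff_exists_mem]
  refine ⟨⟨fun ⟨c, hc, h⟩ => ?_, fun ⟨d, hd, c', hc', h⟩ => ?_⟩, exists_congr fun d =>
    and_congr_right fun _ => exists_mul_le_norm_one_sub_iff (fun x => norm_charFun_le_one _)
      (fun x => rpow_nonneg (norm_nonneg _) β)
      (fun x => rpow_le_one (norm_nonneg _) ((torusNorm_le_half _).trans (by norm_num)) hβ0.le)⟩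
  · exact exists_torusNorm_rpow_le_of_eventually (by fun_prop) (by simp [ψ]) hψ1 hper
      (by positivity) (h.mul_abs_rpow_le_comp_mul (2 * π))
  · have hloc := (eventually_mul_abs_rpow_le_of_torusNorm h).mul_abs_rpow_le_comp_mul (2 * π)⁻¹
    refine ⟨c' * |(d : ℝ)| ^ β * |(2 * π)⁻¹| ^ β, by positivity, hloc.mono fun x hx => ?_⟩
    rwa [mul_inv_cancel_left₀ two_pi_pos.ne'] at hx

/-- Proposition 2.1 of the paper: equivalent characterizations of the
lower H\"older-type bound `|1 - φ(x)| ≥ c|x|^β` near `0`, for the characteristic function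
`φ` of an integer-valued random variable. -/
theorem charFun_lower_bound_equivalences
    {Ω : Type*} [MeasurableSpace Ω] (P : Measure Ω) [IsProbabilityMeasure P]
    (X : Ω → ℤ) (hmeas : Measurable X)
    (φ : ℝ → ℂ)
    (hφ : ∀ x : ℝ, φ x = ∫ ω, Complex.exp (Complex.I * x * (X ω : ℂ)) ∂P)
    (β : ℝ) (hβ0 : 0 < β) (hβ2 : β ≤ 2) :
    ((∃ c : ℝ, 0 < c ∧ ∃ U ∈ nhds (0 : ℝ), ∀ x ∈ U, c * |x| ^ β ≤ ‖1 - φ x‖) ↔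
      (∃ d : ℕ, 0 < d ∧ ∃ c' : ℝ, 0 < c' ∧
        ∀ x : ℝ, c' * torusNorm ((d : ℝ) * x) ^ β ≤ ‖1 - φ (2 * π * x)‖)) ∧
    ((∃ d : ℕ, 0 < d ∧ ∃ c' : ℝ, 0 < c' ∧
        ∀ x : ℝ, c' * torusNorm ((d : ℝ) * x) ^ β ≤ ‖1 - φ (2 * π * x)‖) ↔
      (∃ d : ℕ, 0 < d ∧ ∃ c' : ℝ, 0 < c' ∧
        ∀ x : ℝ, c' * ‖φ (2 * π * x)‖ * torusNorm ((d : ℝ) * x) ^ β ≤ ‖1 - φ (2 * π * x)‖)) :=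
  charFun_lower_bound_equivalences_general P X hmeas φ hφ β hβ0
end
end

section
/- Given η ∈ ℝ, define g_η(ε) = Σ_{l=1}^∞ e^{−4^l ε} 2^{ηl} for ε ∈ (0,1]. Then there exists a constant C = C(η) > 1 such that for all ε ∈ (0,1]: if η < 0 then C^{−1} ≤ g_η(ε) ≤ C; if η = 0 then C^{−1} log(ε^{−1}+1) ≤ g_η(ε) ≤ C log(ε^{−1}+1); and if η > 0 then C^{−1} ε^{−η/2} ≤ g_η(ε) ≤ C ε^{−η/2}. -/
open MeasureTheory ProbabilityTheory Filter Finset Real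
open scoped ENNReal

noncomputable section

/-- The function `g_η(ε) = ∑_{l=1}^∞ e^{-4^l ε} 2^{ηl}`. -/
def gFun (η : ℝ) (ε : ℝ) : ℝ :=
  ∑' l : ℕ, Real.exp (-(4 : ℝ) ^ (l + 1) * ε) * (2 : ℝ) ^ (η * ((l : ℝ) + 1))

/-!
With `q = 2^η` we have `g_η(ε) = ∑_{n ≥ 1} e^{-4^n ε} q^n`. Choose `m` with `4^m ≤ ε⁻¹ < 4^{m+1}`.
For `n ≤ m + 1` the factor `e^{-4^n ε}` lies in `[e^{-4}, 1]`, while the remaining tail is at most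
`q^{m+1} g_η(1)` because `4^{m+1} ε ≥ 1`. Hence `g_η(ε)` is comparable, uniformly in `ε`, to the
geometric sum `q + ⋯ + q^{m+1}`, which is of order `1`, `m + 1 ≍ log(ε⁻¹ + 1)` or
`q^m ≍ ε^{-η/2}` according to the sign of `η`.
-/

open Set Topology

def lacunarySum (a q ε : ℝ) : ℝ := ∑' n : ℕ, exp (-a ^ (n + 1) * ε) * q ^ (n + 1)

def ComparableOn {α : Type*} (f h : α → ℝ) (s : Set α) : Prop :=
  ∃ C, 1 < C ∧ ∀ x ∈ s, C⁻¹ * h x ≤ f x ∧ f x ≤ C * h x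

theorem ComparableOn.of_bounds {α : Type*} {f h : α → ℝ} {s : Set α} {c D : ℝ} (hc : 0 < c)
    (hh : ∀ x ∈ s, 0 ≤ h x) (hf : ∀ x ∈ s, c * h x ≤ f x ∧ f x ≤ D * h x) :
    ComparableOn f h s := by
  refine ⟨max (max c⁻¹ D) 2, lt_max_of_lt_right one_lt_two, fun x hx => ⟨?_, ?_⟩⟩
  · have hC : (max (max c⁻¹ D) 2)⁻¹ ≤ c :=
      inv_le_of_inv_le₀ hc (le_max_of_le_left (le_max_left _ _))
    exact (mul_le_mul_of_nonneg_right hC (hh x hx)).trans (hf x hx).1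
  · exact (hf x hx).2.trans
      (mul_le_mul_of_nonneg_right (le_max_of_le_left (le_max_right _ _)) (hh x hx))

section Lacunary

variable {a q ε : ℝ}

theorem summable_exp_neg_pow_mul_pow (ha : 1 < a) (hε : 0 < ε) (q : ℝ) :
    Summable fun n : ℕ => exp (-a ^ (n + 1) * ε) * q ^ (n + 1) := by
  refine summable_of_ratio_norm_eventually_le (r := 1 / 2) (by norm_num) ?_
  have hdecay : Tendsto (fun n : ℕ => |q| * exp (-((a - 1) * ε * a ^ (n + 1)))) atTop (𝓝 0) := by
    have hpow := (tendsto_pow_atTop_atTop_of_one_lt ha).comp (tendsto_add_atTop_nat 1)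
    simpa using (tendsto_exp_neg_atTop_nhds_zero.comp
      (hpow.const_mul_atTop (by nlinarith : 0 < (a - 1) * ε))).const_mul |q|
  filter_upwards [hdecay.eventually (eventually_le_nhds (by norm_num : (0 : ℝ) < 1 / 2))] with n hn
  have hsplit : exp (-a ^ (n + 1 + 1) * ε)
      = exp (-((a - 1) * ε * a ^ (n + 1))) * exp (-a ^ (n + 1) * ε) := by
    rw [← exp_add]; ring_nf
  simp only [norm_mul, norm_pow, Real.norm_eq_abs, abs_exp]
  rw [hsplit, pow_succ |q| (n + 1)]
  calc exp (-((a - 1) * ε * a ^ (n + 1))) * exp (-a ^ (n + 1) * ε) * (|q| ^ (n + 1) * |q|)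
      = (|q| * exp (-((a - 1) * ε * a ^ (n + 1)))) * (exp (-a ^ (n + 1) * ε) * |q| ^ (n + 1)) := by
        ring
    _ ≤ 1 / 2 * (exp (-a ^ (n + 1) * ε) * |q| ^ (n + 1)) :=
        mul_le_mul_of_nonneg_right hn (by positivity)

theorem lacunarySum_nonneg (a : ℝ) (hq : 0 ≤ q) (ε : ℝ) : 0 ≤ lacunarySum a q ε :=
  tsum_nonneg fun _ => by positivity

theorem exp_neg_mul_sum_le_lacunarySum (ha : 1 < a) (hq : 0 ≤ q) (hε : 0 < ε) {m : ℕ}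
    (hm : a ^ m ≤ ε⁻¹) : exp (-a) * ∑ n ∈ range (m + 1), q ^ (n + 1) ≤ lacunarySum a q ε := by
  have hterm : ∀ n ∈ range (m + 1),
      exp (-a) * q ^ (n + 1) ≤ exp (-a ^ (n + 1) * ε) * q ^ (n + 1) := by
    intro n hn
    refine mul_le_mul_of_nonneg_right (exp_le_exp.2 ?_) (pow_nonneg hq _)
    have hmε : a ^ m * ε ≤ 1 := by rwa [← one_div, le_div_iff₀ hε] at hm
    have hpow : a ^ (n + 1) ≤ a ^ (m + 1) :=
      pow_le_pow_right₀ ha.le (Nat.succ_le_succ (Nat.lt_succ_iff.1 (mem_range.1 hn)))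
    nlinarith [pow_succ a m]
  calc exp (-a) * ∑ n ∈ range (m + 1), q ^ (n + 1)
      ≤ ∑ n ∈ range (m + 1), exp (-a ^ (n + 1) * ε) * q ^ (n + 1) := by
        rw [mul_sum]; exact sum_le_sum hterm
    _ ≤ lacunarySum a q ε :=
        (summable_exp_neg_pow_mul_pow ha hε q).sum_le_tsum _ fun n _ => by positivity

theorem lacunarySum_le (ha : 1 < a) (hq : 0 ≤ q) (hε : 0 < ε) {m : ℕ} (hm : ε⁻¹ ≤ a ^ (m + 1)) :
    lacunarySum a q ε ≤ (1 + lacunarySum a q 1) * ∑ n ∈ range (m + 1), q ^ (n + 1) := by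
  set S := ∑ n ∈ range (m + 1), q ^ (n + 1)
  have hsum := summable_exp_neg_pow_mul_pow ha hε q
  have hhead : ∑ n ∈ range (m + 1), exp (-a ^ (n + 1) * ε) * q ^ (n + 1) ≤ S :=
    sum_le_sum fun n _ => mul_le_of_le_one_left (pow_nonneg hq _)
      (exp_le_one_iff.2 (by have := pow_pos (zero_lt_one.trans ha) (n + 1); nlinarith))
  have htail : ∑' k, exp (-a ^ (k + (m + 1) + 1) * ε) * q ^ (k + (m + 1) + 1)
      ≤ q ^ (m + 1) * lacunarySum a q 1 := by
    rw [lacunarySum, ← tsum_mul_left]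
    refine (summable_nat_add_iff (m + 1)).2 hsum |>.tsum_le_tsum (fun k => ?_)
      ((summable_exp_neg_pow_mul_pow ha one_pos q).mul_left _)
    have hmε : 1 ≤ a ^ (m + 1) * ε := by rwa [inv_le_iff_one_le_mul₀ hε] at hm
    have hexp : exp (-a ^ (k + (m + 1) + 1) * ε) ≤ exp (-a ^ (k + 1) * 1) := by
      refine exp_le_exp.2 ?_
      have := pow_pos (zero_lt_one.trans ha) (k + 1)
      have : a ^ (k + (m + 1) + 1) * ε = a ^ (k + 1) * (a ^ (m + 1) * ε) := by ring
      nlinarith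
    calc exp (-a ^ (k + (m + 1) + 1) * ε) * q ^ (k + (m + 1) + 1)
        = exp (-a ^ (k + (m + 1) + 1) * ε) * (q ^ (m + 1) * q ^ (k + 1)) := by ring
      _ ≤ exp (-a ^ (k + 1) * 1) * (q ^ (m + 1) * q ^ (k + 1)) :=
          mul_le_mul_of_nonneg_right hexp (by positivity)
      _ = q ^ (m + 1) * (exp (-a ^ (k + 1) * 1) * q ^ (k + 1)) := by ring
  have hlast : q ^ (m + 1) ≤ S :=
    single_le_sum (f := fun n => q ^ (n + 1)) (fun n _ => pow_nonneg hq _) (self_mem_range_succ m)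
  have hK := lacunarySum_nonneg a hq 1
  rw [lacunarySum, ← hsum.sum_add_tsum_nat_add (m + 1)]
  linarith [mul_le_mul_of_nonneg_right hlast hK]

end Lacunary

theorem sum_range_pow_succ_le_of_lt_one {q : ℝ} (hq₀ : 0 ≤ q) (hq₁ : q < 1) (N : ℕ) :
    ∑ n ∈ range N, q ^ (n + 1) ≤ q / (1 - q) := by
  simp only [pow_succ', ← mul_sum, range_eq_Ico]
  simpa [div_eq_mul_inv] using
    mul_le_mul_of_nonneg_left (geom_sum_Ico_le_of_lt_one (m := 0) (n := N) hq₀ hq₁) hq₀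

theorem sum_range_pow_succ_le_of_one_lt {q : ℝ} (hq : 1 < q) (N : ℕ) :
    ∑ n ∈ range N, q ^ (n + 1) ≤ q ^ (N + 1) / (q - 1) := by
  simp only [pow_succ', ← mul_sum]
  rw [geom_sum_eq hq.ne', mul_div_assoc', div_le_div_iff_of_pos_right (by linarith)]
  nlinarith

theorem succ_mul_log_two_le_log_add_one {x : ℝ} {m : ℕ} (hm : (4 : ℝ) ^ m ≤ x) :
    (m + 1) * log 2 ≤ log (x + 1) := by
  have h : (2 : ℝ) ^ (m + 1) ≤ x + 1 := by
    have : (4 : ℝ) ^ m = (2 ^ m) ^ 2 := by rw [← pow_mul, mul_comm, pow_mul]; norm_num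
    nlinarith [sq_nonneg ((2 : ℝ) ^ m - 1), pow_succ (2 : ℝ) m]
  calc (m + 1) * log 2 = log (2 ^ (m + 1)) := by rw [log_pow]; push_cast; ring
    _ ≤ log (x + 1) := log_le_log (by positivity) h

theorem log_add_one_le_succ_mul_log_eight {x : ℝ} {m : ℕ} (hx : 1 ≤ x)
    (hm : x ≤ (4 : ℝ) ^ (m + 1)) :
    log (x + 1) ≤ (m + 1) * log 8 := by
  have h : x + 1 ≤ 8 ^ (m + 1) := by
    have h2 : (2 : ℝ) ≤ 2 ^ (m + 1) := le_self_pow₀ one_le_two (Nat.succ_ne_zero m)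
    calc x + 1 ≤ 2 * 4 ^ (m + 1) := by linarith
      _ ≤ 2 ^ (m + 1) * 4 ^ (m + 1) := by gcongr
      _ = 8 ^ (m + 1) := by rw [← mul_pow]; norm_num
  calc log (x + 1) ≤ log (8 ^ (m + 1)) := log_le_log (by linarith) h
    _ = (m + 1) * log 8 := by rw [log_pow]; push_cast; ring

theorem four_pow_rpow_half (η : ℝ) (k : ℕ) : ((4 : ℝ) ^ k) ^ (η / 2) = ((2 : ℝ) ^ η) ^ k := by
  rw [← rpow_natCast, ← rpow_natCast (2 ^ η), ← rpow_mul (by norm_num), ← rpow_mul (by norm_num),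
    show (4 : ℝ) = 2 ^ (2 : ℝ) by norm_num, ← rpow_mul (by norm_num)]
  ring_nf

theorem gFun_eq_lacunarySum (η ε : ℝ) : gFun η ε = lacunarySum 4 (2 ^ η) ε := by
  refine tsum_congr fun l => congrArg _ ?_
  rw [rpow_mul (by norm_num)]
  exact_mod_cast rpow_natCast _ (l + 1)

section Cases

variable {η : ℝ}

theorem gFun_comparableOn_one_of_neg (hη : η < 0) : ComparableOn (gFun η) 1 (Ioc 0 1) := by
  set q := (2 : ℝ) ^ η
  have hq₀ : 0 < q := rpow_pos_of_pos two_pos η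
  have hq₁ : q < 1 := rpow_lt_one_of_one_lt_of_neg one_lt_two hη
  have hK : 0 ≤ 1 + lacunarySum 4 q 1 := by linarith [lacunarySum_nonneg (4 : ℝ) hq₀.le 1]
  refine .of_bounds (c := exp (-4) * q) (D := (1 + lacunarySum 4 q 1) * (q / (1 - q)))
    (by positivity) (fun _ _ => zero_le_one) fun ε ⟨hε, hε₁⟩ => ?_
  obtain ⟨m, hm, hm'⟩ :=
    exists_nat_pow_near (one_le_inv_iff₀.2 ⟨hε, hε₁⟩) (by norm_num : (1 : ℝ) < 4)
  simp only [Pi.one_apply, mul_one, gFun_eq_lacunarySum]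
  constructor
  · calc exp (-4) * q ≤ exp (-4) * ∑ n ∈ range (m + 1), q ^ (n + 1) := by
          gcongr
          calc q = q ^ (0 + 1) := (pow_one q).symm
            _ ≤ _ := single_le_sum (f := fun n => q ^ (n + 1)) (fun n _ => by positivity)
                (mem_range.2 m.succ_pos)
      _ ≤ lacunarySum 4 q ε := exp_neg_mul_sum_le_lacunarySum (by norm_num) hq₀.le hε hm
  · exact (lacunarySum_le (by norm_num) hq₀.le hε hm'.le).trans
      (mul_le_mul_of_nonneg_left (sum_range_pow_succ_le_of_lt_one hq₀.le hq₁ _) hK)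

theorem gFun_zero_comparableOn_log : ComparableOn (gFun 0) (fun ε => log (ε⁻¹ + 1)) (Ioc 0 1) := by
  set K := lacunarySum 4 1 1
  have hK : 0 ≤ K := lacunarySum_nonneg 4 zero_le_one 1
  have hlog₂ : 0 < log 2 := log_pos one_lt_two
  have hlog₈ : 0 < log 8 := log_pos (by norm_num)
  refine .of_bounds (c := exp (-4) / log 8) (D := (1 + K) / log 2) (by positivity)
    (fun ε hε => log_nonneg (by linarith [one_le_inv_iff₀.2 hε])) fun ε ⟨hε, hε₁⟩ => ?_
  have hε' : 1 ≤ ε⁻¹ := one_le_inv_iff₀.2 ⟨hε, hε₁⟩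
  obtain ⟨m, hm, hm'⟩ := exists_nat_pow_near hε' (by norm_num : (1 : ℝ) < 4)
  have hS : ∑ n ∈ range (m + 1), (1 : ℝ) ^ (n + 1) = m + 1 := by simp
  rw [gFun_eq_lacunarySum, rpow_zero]
  constructor
  · calc exp (-4) / log 8 * log (ε⁻¹ + 1) ≤ exp (-4) / log 8 * ((m + 1) * log 8) := by
          gcongr; exact log_add_one_le_succ_mul_log_eight hε' hm'.le
      _ = exp (-4) * ∑ n ∈ range (m + 1), (1 : ℝ) ^ (n + 1) := by rw [hS]; field_simp
      _ ≤ lacunarySum 4 1 ε := exp_neg_mul_sum_le_lacunarySum (by norm_num) zero_le_one hε hm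
  · calc lacunarySum 4 1 ε ≤ (1 + K) * ∑ n ∈ range (m + 1), (1 : ℝ) ^ (n + 1) :=
          lacunarySum_le (by norm_num) zero_le_one hε hm'.le
      _ = (1 + K) / log 2 * ((m + 1) * log 2) := by rw [hS]; field_simp
      _ ≤ (1 + K) / log 2 * log (ε⁻¹ + 1) := by
          gcongr; exact succ_mul_log_two_le_log_add_one hm

theorem gFun_comparableOn_rpow_of_pos (hη : 0 < η) :
    ComparableOn (gFun η) (fun ε => ε ^ (-η / 2)) (Ioc 0 1) := by
  set q := (2 : ℝ) ^ η
  have hq : 1 < q := one_lt_rpow one_lt_two hη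
  have hK : 0 ≤ 1 + lacunarySum 4 q 1 := by
    linarith [lacunarySum_nonneg (4 : ℝ) (zero_lt_one.trans hq).le 1]
  refine .of_bounds (c := exp (-4)) (D := (1 + lacunarySum 4 q 1) * (q ^ 2 / (q - 1)))
    (by positivity) (fun ε hε => rpow_nonneg hε.1.le _) fun ε ⟨hε, hε₁⟩ => ?_
  obtain ⟨m, hm, hm'⟩ :=
    exists_nat_pow_near (one_le_inv_iff₀.2 ⟨hε, hε₁⟩) (by norm_num : (1 : ℝ) < 4)
  have hqm : q ^ m ≤ ε ^ (-η / 2) ∧ ε ^ (-η / 2) ≤ q ^ (m + 1) := by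
    rw [neg_div, rpow_neg hε.le, ← inv_rpow hε.le, ← four_pow_rpow_half, ← four_pow_rpow_half]
    exact ⟨rpow_le_rpow (by positivity) hm (by positivity),
      rpow_le_rpow (by positivity) hm'.le (by positivity)⟩
  rw [gFun_eq_lacunarySum]
  constructor
  · calc exp (-4) * ε ^ (-η / 2) ≤ exp (-4) * ∑ n ∈ range (m + 1), q ^ (n + 1) := by
          gcongr
          exact hqm.2.trans (single_le_sum (f := fun n => q ^ (n + 1)) (fun n _ => by positivity)
            (self_mem_range_succ m))
      _ ≤ lacunarySum 4 q ε := exp_neg_mul_sum_le_lacunarySum (by norm_num) (by positivity) hε hm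
  · calc lacunarySum 4 q ε ≤ (1 + lacunarySum 4 q 1) * ∑ n ∈ range (m + 1), q ^ (n + 1) :=
          lacunarySum_le (by norm_num) (by positivity) hε hm'.le
      _ ≤ (1 + lacunarySum 4 q 1) * (q ^ 2 / (q - 1) * q ^ m) := by
          gcongr
          calc _ ≤ q ^ (m + 1 + 1) / (q - 1) := sum_range_pow_succ_le_of_one_lt hq _
            _ = q ^ 2 / (q - 1) * q ^ m := by ring
      _ ≤ _ := by rw [← mul_assoc]; gcongr; exact hqm.1

end Cases

/-- Lemma 4.2 of the paper: two-sided asymptotics of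
`g_η(ε) = ∑_{l≥1} e^{-4^l ε} 2^{ηl}` on `(0, 1]`. -/
theorem gFun_asymptotics (η : ℝ) :
    ∃ C : ℝ, 1 < C ∧ ∀ ε : ℝ, 0 < ε → ε ≤ 1 →
      (η < 0 → C⁻¹ ≤ gFun η ε ∧ gFun η ε ≤ C) ∧
      (η = 0 → C⁻¹ * Real.log (ε⁻¹ + 1) ≤ gFun η ε ∧ gFun η ε ≤ C * Real.log (ε⁻¹ + 1)) ∧
      (0 < η → C⁻¹ * ε ^ (-η / 2) ≤ gFun η ε ∧ gFun η ε ≤ C * ε ^ (-η / 2)) := by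
  rcases lt_trichotomy η 0 with hη | rfl | hη
  · obtain ⟨C, hC, h⟩ := gFun_comparableOn_one_of_neg hη
    refine ⟨C, hC, fun ε hε hε₁ => ⟨fun _ => ?_, fun h0 => (hη.ne h0).elim,
      fun h0 => (lt_asymm hη h0).elim⟩⟩
    simpa using h ε ⟨hε, hε₁⟩
  · obtain ⟨C, hC, h⟩ := gFun_zero_comparableOn_log
    exact ⟨C, hC, fun ε hε hε₁ => ⟨fun h0 => (lt_irrefl 0 h0).elim, fun _ => h ε ⟨hε, hε₁⟩,
      fun h0 => (lt_irrefl 0 h0).elim⟩⟩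
  · obtain ⟨C, hC, h⟩ := gFun_comparableOn_rpow_of_pos hη
    exact ⟨C, hC, fun ε hε hε₁ => ⟨fun h0 => (lt_asymm hη h0).elim, fun h0 => (hη.ne' h0).elim,
      fun _ => h ε ⟨hε, hε₁⟩⟩⟩
end
end

section
/- Let I₁, …, I_K be pairwise disjoint closed arcs contained in the torus 𝕋, with lengths L₁, …, L_K. Then for every Borel probability measure ν on 𝕋 that is supported in the complement of I₁ ∪ ⋯ ∪ I_K (i.e., ν(I₁ ∪ ⋯ ∪ I_K) = 0), one has W₁(ν, μ) ≥ (Σ_{i=1}^K L_i²) / 4. -/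
open MeasureTheory ProbabilityTheory Filter Finset Real
open scoped ENNReal

noncomputable section

lemma arc_min_integral (a l : ℝ) (hl : 0 ≤ l) :
    ∫ x in Set.Ioc a (a + l), min (x - a) (a + l - x) = l ^ 2 / 4 := by
  rw [← intervalIntegral.integral_of_le (by linarith)]
  have hc : Continuous fun x : ℝ => min (x - a) (a + l - x) :=
    (continuous_id.sub continuous_const).min (continuous_const.sub continuous_id)
  rw [← intervalIntegral.integral_add_adjacent_intervals (b := a + l/2)
    (hc.intervalIntegrable _ _) (hc.intervalIntegrable _ _)]
  have h1 : ∫ x in a..(a + l/2), min (x - a) (a + l - x) = ∫ x in a..(a + l/2), (x - a) := by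
    apply intervalIntegral.integral_congr
    intro x hx
    rw [Set.uIcc_of_le (by linarith)] at hx
    obtain ⟨h1, h2⟩ := hx; exact min_eq_left (by linarith)
  have h2 : ∫ x in (a + l/2)..(a + l), min (x - a) (a + l - x)
      = ∫ x in (a + l/2)..(a + l), (a + l - x) := by
    apply intervalIntegral.integral_congr
    intro x hx
    rw [Set.uIcc_of_le (by linarith)] at hx
    obtain ⟨h1, h2⟩ := hx; exact min_eq_right (by linarith)
  rw [h1, h2]
  rw [intervalIntegral.integral_sub intervalIntegral.intervalIntegrable_id
    (intervalIntegrable_const),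
    intervalIntegral.integral_sub intervalIntegrable_const
    intervalIntegral.intervalIntegrable_id]
  simp [integral_id]
  ring

lemma arc_dist_lower (a l x : ℝ) (hx : x ∈ Set.Icc a (a + l))
    (y : UnitAddCircle) (hy : y ∉ (fun t : ℝ => (t : UnitAddCircle)) '' Set.Icc a (a + l)) :
    min (x - a) (a + l - x) ≤ dist (x : UnitAddCircle) y := by
  by_contra h
  push_neg at h
  obtain ⟨u, rfl⟩ := QuotientAddGroup.mk_surjective y
  have hd : dist (x : UnitAddCircle) (u : UnitAddCircle) = |x - u - round (x - u)| := by
    rw [dist_eq_norm]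
    have : (x : UnitAddCircle) - (u : UnitAddCircle) = ((x - u : ℝ) : UnitAddCircle) := by
      exact (AddCircle.coe_sub 1 x u).symm
    rw [this, UnitAddCircle.norm_eq]
  rw [hd] at h
  set d := x - u - round (x - u) with hddef
  apply hy
  refine ⟨x - d, ⟨?_, ?_⟩, ?_⟩
  · have := abs_lt.mp (lt_of_lt_of_le h (min_le_left _ _))
    linarith [this.1, this.2]
  · have := abs_lt.mp (lt_of_lt_of_le h (min_le_right _ _))
    linarith [this.1, this.2]
  · show ((x - d : ℝ) : UnitAddCircle) = (u : UnitAddCircle)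
    rw [QuotientAddGroup.eq_iff_sub_mem]
    refine AddSubgroup.mem_zmultiples_iff.mpr ⟨round (x - u), ?_⟩
    simp [hddef]
    ring


theorem wasserstein_lower_bound_arcs' (K : ℕ) (a L : Fin K → ℝ)
    (hL0 : ∀ i, 0 ≤ L i) (hL1 : ∀ i, L i < 1)
    (hdisj : ∀ i j, i ≠ j →
      Disjoint ((fun x : ℝ => (x : UnitAddCircle)) '' Set.Icc (a i) (a i + L i))
        ((fun x : ℝ => (x : UnitAddCircle)) '' Set.Icc (a j) (a j + L j)))
    (ν : Measure UnitAddCircle) [IsProbabilityMeasure ν]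
    (hsupp : ν (⋃ i, (fun x : ℝ => (x : UnitAddCircle)) '' Set.Icc (a i) (a i + L i)) = 0) :
    (∑ i, L i ^ 2) / 4 ≤ sInf ((fun γ => (∫ z, dist z.1 z.2 ^ (1:ℝ) ∂γ) ^ (1 / (1:ℝ))) ''
      {γ : Measure (UnitAddCircle × UnitAddCircle) | γ.map Prod.fst = ν ∧ γ.map Prod.snd = volume}) := by
  haveI hfact : Fact ((0:ℝ) < 1) := ⟨one_pos⟩
  haveI hprobvol : IsProbabilityMeasure (volume : Measure UnitAddCircle) :=
    ⟨UnitAddCircle.measure_univ⟩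
  set Ci : Fin K → Set UnitAddCircle :=
    fun i => (fun x : ℝ => (x : UnitAddCircle)) '' Set.Icc (a i) (a i + L i) with hCidef
  have hcont_mk : Continuous ((↑) : ℝ → UnitAddCircle) := AddCircle.continuous_mk' 1
  have hCi_meas : ∀ i, MeasurableSet (Ci i) := fun i =>
    ((isCompact_Icc.image hcont_mk).isClosed).measurableSet
  set C : Set UnitAddCircle := ⋃ i, Ci i with hCdef
  have hC_meas : MeasurableSet C := MeasurableSet.iUnion fun i => hCi_meas i
  have hνC : ν C = 0 := hsupp
  have hCc_ne : Cᶜ.Nonempty := by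
    rw [Set.nonempty_compl]
    intro hh
    rw [hh] at hνC
    exact one_ne_zero ((measure_univ (μ := ν)).symm.trans hνC)
  set f : UnitAddCircle → ℝ := fun z => Metric.infDist z Cᶜ with hfdef
  have hf_cont : Continuous f := Metric.continuous_infDist_pt _
  have hf_nonneg : ∀ z, 0 ≤ f z := fun z => Metric.infDist_nonneg
  have hf_int : Integrable f (volume : Measure UnitAddCircle) :=
    hf_cont.integrable_of_hasCompactSupport ((isClosed_tsupport _).isCompact)
  -- pointwise bound on each arc
  have hpt : ∀ i, ∀ x : ℝ, x ∈ Set.Icc (a i) (a i + L i) →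
      min (x - a i) (a i + L i - x) ≤ f ((x : ℝ) : UnitAddCircle) := by
    intro i x hx
    by_contra h
    push_neg at h
    obtain ⟨y, hyC, hyd⟩ := (Metric.infDist_lt_iff hCc_ne).mp h
    have hyCi : y ∉ Ci i := fun hmem => hyC (Set.mem_iUnion.mpr ⟨i, hmem⟩)
    exact absurd hyd (not_lt.mpr (arc_dist_lower (a i) (L i) x hx y hyCi))
  -- per-arc integral bound
  have per_arc : ∀ i, L i ^ 2 / 4 ≤ ∫ z in Ci i, f z ∂(volume) := by
    intro i
    have hsub : Set.Ioc (a i) (a i + L i) ⊆ Set.Ioc (a i) (a i + 1) :=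
      Set.Ioc_subset_Ioc_right (by linarith [(hL1 i).le])
    have e1 : ∫ z in Ci i, f z ∂(volume)
        = ∫ x in Set.Ioc (a i) (a i + 1), (Ci i).indicator f ((x : ℝ) : UnitAddCircle) := by
      rw [← integral_indicator (hCi_meas i),
        ← UnitAddCircle.integral_preimage (a i) ((Ci i).indicator f)]
    have e2 : L i ^ 2 / 4 = ∫ x in Set.Ioc (a i) (a i + 1),
        (Set.Ioc (a i) (a i + L i)).indicator (fun x => min (x - a i) (a i + L i - x)) x := by
      rw [setIntegral_indicator measurableSet_Ioc, Set.inter_eq_right.mpr hsub,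
        arc_min_integral (a i) (L i) (hL0 i)]
    rw [e1, e2]
    have hintind : Integrable ((Ci i).indicator f) (volume : Measure UnitAddCircle) :=
      hf_int.indicator (hCi_meas i)
    have hint1 : IntegrableOn (fun x : ℝ => (Ci i).indicator f ((x : ℝ) : UnitAddCircle))
        (Set.Ioc (a i) (a i + 1)) volume :=
      ((UnitAddCircle.measurePreserving_mk (a i)).integrable_comp
        hintind.aestronglyMeasurable).mpr hintind
    have hint2 : IntegrableOn
        ((Set.Ioc (a i) (a i + L i)).indicator (fun x => min (x - a i) (a i + L i - x)))
        (Set.Ioc (a i) (a i + 1)) volume := by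
      have : Continuous fun x : ℝ => min (x - a i) (a i + L i - x) :=
        (continuous_id.sub continuous_const).min (continuous_const.sub continuous_id)
      exact (this.integrableOn_Ioc).indicator measurableSet_Ioc
    apply setIntegral_mono_on hint2 hint1 measurableSet_Ioc
    intro x hx
    by_cases hx2 : x ∈ Set.Ioc (a i) (a i + L i)
    · rw [Set.indicator_of_mem hx2, Set.indicator_of_mem]
      · exact hpt i x ⟨hx2.1.le, hx2.2⟩
      · exact ⟨x, ⟨hx2.1.le, hx2.2⟩, rfl⟩
    · rw [Set.indicator_of_notMem hx2]
      exact Set.indicator_nonneg (fun z _ => hf_nonneg z) _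
  -- total integral bound
  have key : (∑ i, L i ^ 2) / 4 ≤ ∫ z, f z ∂(volume : Measure UnitAddCircle) := by
    have hunion : ∫ z in C, f z ∂(volume) = ∑ i, ∫ z in Ci i, f z ∂(volume) := by
      rw [hCdef, integral_iUnion hCi_meas (fun i j hij => hdisj i j hij) hf_int.integrableOn]
      exact tsum_fintype _
    calc (∑ i, L i ^ 2) / 4 = ∑ i, L i ^ 2 / 4 := by rw [Finset.sum_div]
      _ ≤ ∑ i, ∫ z in Ci i, f z ∂(volume) := Finset.sum_le_sum fun i _ => per_arc i
      _ = ∫ z in C, f z ∂(volume) := hunion.symm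
      _ ≤ ∫ z, f z ∂(volume) :=
          setIntegral_le_integral hf_int (Filter.Eventually.of_forall hf_nonneg)
  -- ν-integral of f is zero
  have hν0 : ∫ z, f z ∂ν = 0 := by
    have hae : f =ᵐ[ν] 0 := by
      filter_upwards [(measure_eq_zero_iff_ae_notMem.mp hνC)] with z hz
      exact Metric.infDist_zero_of_mem hz
    rw [integral_congr_ae hae]
    simp
  -- bound every coupling
  apply le_csInf
  · refine ⟨_, Set.mem_image_of_mem _ (⟨?_, ?_⟩ :
      (ν.prod (volume : Measure UnitAddCircle)).map Prod.fst = ν ∧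
      (ν.prod (volume : Measure UnitAddCircle)).map Prod.snd = volume)⟩
    · rw [Measure.map_fst_prod]; simp
    · rw [Measure.map_snd_prod]; simp
  rintro b ⟨γ, ⟨h1, h2⟩, rfl⟩
  haveI hγ_prob : IsProbabilityMeasure γ := by
    constructor
    have : (γ.map Prod.snd) Set.univ = 1 := by rw [h2]; exact measure_univ
    rwa [Measure.map_apply measurable_snd MeasurableSet.univ, Set.preimage_univ] at this
  have hint_dist : Integrable (fun z : UnitAddCircle × UnitAddCircle => dist z.1 z.2) γ :=
    continuous_dist.integrable_of_hasCompactSupport ((isClosed_tsupport _).isCompact)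
  have hint_f1 : Integrable (fun z : UnitAddCircle × UnitAddCircle => f z.1) γ :=
    (hf_cont.comp continuous_fst).integrable_of_hasCompactSupport
      ((isClosed_tsupport _).isCompact)
  have hint_f2 : Integrable (fun z : UnitAddCircle × UnitAddCircle => f z.2) γ :=
    (hf_cont.comp continuous_snd).integrable_of_hasCompactSupport
      ((isClosed_tsupport _).isCompact)
  have hmono : ∫ z, (f z.2 - f z.1) ∂γ ≤ ∫ z, dist z.1 z.2 ∂γ := by
    apply integral_mono (hint_f2.sub hint_f1) hint_dist
    intro z
    have h3 := Metric.infDist_le_infDist_add_dist (x := z.2) (y := z.1) (s := Cᶜ)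
    have h4 : dist z.2 z.1 = dist z.1 z.2 := dist_comm _ _
    simp only [Pi.sub_apply]
    simp only [hfdef]
    linarith
  have hsplit : ∫ z, (f z.2 - f z.1) ∂γ = (∫ z, f z ∂(volume : Measure UnitAddCircle)) - ∫ z, f z ∂ν := by
    rw [integral_sub hint_f2 hint_f1]
    congr 1
    · rw [← h2, integral_map measurable_snd.aemeasurable hf_cont.aestronglyMeasurable]
    · rw [← h1, integral_map measurable_fst.aemeasurable hf_cont.aestronglyMeasurable]
  have : (∑ i, L i ^ 2) / 4 ≤ ∫ z, dist z.1 z.2 ∂γ := by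
    rw [hν0, sub_zero] at hsplit
    linarith [key, hmono, hsplit.ge]
  simpa [Real.rpow_natCast] using this

/-- Lemma 5.2 of the paper: if `ν` gives zero mass to a finite disjoint
union of closed arcs of lengths `L₁, …, L_K`, then `W₁(ν, μ) ≥ (∑ L_i²)/4`. -/
theorem wasserstein_lower_bound_arcs (K : ℕ) (a L : Fin K → ℝ)
    (hL0 : ∀ i, 0 ≤ L i) (hL1 : ∀ i, L i < 1)
    (hdisj : ∀ i j, i ≠ j →
      Disjoint ((fun x : ℝ => (x : UnitAddCircle)) '' Set.Icc (a i) (a i + L i))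
        ((fun x : ℝ => (x : UnitAddCircle)) '' Set.Icc (a j) (a j + L j)))
    (ν : Measure UnitAddCircle) [IsProbabilityMeasure ν]
    (hsupp : ν (⋃ i, (fun x : ℝ => (x : UnitAddCircle)) '' Set.Icc (a i) (a i + L i)) = 0) :
    (∑ i, L i ^ 2) / 4 ≤ wassersteinDist 1 ν volume := by
  have h := wasserstein_lower_bound_arcs' K a L hL0 hL1 hdisj ν hsupp
  rw [wassersteinDist, couplings]
  exact h
end
end

section
/- Let α be an irrational number and let q be a positive integer such that ‖qα‖ ≤ C q^{−γ} for some constants γ ≥ 1 and C > 0. Set K(q) = ⌊q^γ/(3C)⌋. Then every Borel probability measure ν on 𝕋 whose support is contained in the finite set { {jα} : j ∈ ℤ, |j| ≤ K(q) } satisfies W₁(ν, μ) ≥ 1/(36q). -/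
open MeasureTheory ProbabilityTheory Filter Finset Real
open scoped ENNReal

noncomputable section

/-! Every point `jα` with `|j| ≤ K` satisfies `‖q • jα‖ = ‖j • qα‖ ≤ K ‖qα‖ ≤ 1/3`, so `ν` lives on
the set where `y ↦ ‖q • y‖` is at most `1/3`. The test function `φ y = max 0 (‖q • y‖ - 1/3) / q`
vanishes there and is `1`-Lipschitz, so `W₁(ν, μ) ≥ ∫ φ dμ` (the easy half of Kantorovich duality).
Since `y ↦ q • y` preserves `μ`, this integral is `(1/2 - 1/3)² / q = 1/(36q)`. -/

instance : IsProbabilityMeasure (volume : Measure UnitAddCircle) :=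
  ⟨UnitAddCircle.measure_univ⟩

lemma integral_comp_nsmul {G E : Type*} [AddCommGroup G] [TopologicalSpace G]
    [IsTopologicalAddGroup G] [MeasurableSpace G] [BorelSpace G] [CompactSpace G]
    [DivisibleBy G ℤ] (μ : Measure G) [μ.IsAddHaarMeasure] [NormedAddCommGroup E]
    [NormedSpace ℝ E] {n : ℕ} (hn : n ≠ 0) {f : G → E} (hf : AEStronglyMeasurable f μ) :
    ∫ g, f (n • g) ∂μ = ∫ g, f g ∂μ := by
  have h := Measure.measurePreserving_zsmul μ (Int.natCast_ne_zero.2 hn)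
  simp only [natCast_zsmul] at h
  rw [← integral_map h.measurable.aemeasurable (h.map_eq.symm ▸ hf), h.map_eq]

lemma integral_max_zero_abs_sub {s : ℝ} (hs₀ : 0 ≤ s) (hs : s ≤ 1 / 2) :
    ∫ x in (-1/2)..(1/2), max 0 (|x| - s) = (1 / 2 - s) ^ 2 := by
  have hint : ∀ a b : ℝ, IntervalIntegrable (fun x => max 0 (|x| - s)) volume a b :=
    fun a b => by apply Continuous.intervalIntegrable; fun_prop
  rw [← intervalIntegral.integral_add_adjacent_intervals (hint _ (-s)) (hint _ _),
    ← intervalIntegral.integral_add_adjacent_intervals (hint (-s) s) (hint _ _)]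
  have h₁ : ∫ x in (-1/2)..(-s), max 0 (|x| - s) = ∫ x in (-1/2)..(-s), -(x + s) := by
    refine intervalIntegral.integral_congr fun x hx => ?_
    rw [Set.uIcc_of_le (by linarith)] at hx
    rw [abs_of_nonpos (by linarith [hx.2]), max_eq_right (by linarith [hx.2]), neg_add']
  have h₂ : ∫ x in (-s)..s, max 0 (|x| - s) = ∫ x in (-s)..s, (0 : ℝ) := by
    refine intervalIntegral.integral_congr fun x hx => ?_
    rw [Set.uIcc_of_le (by linarith)] at hx
    rw [max_eq_left (by linarith [abs_le.2 hx])]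
  have h₃ : ∫ x in s..(1/2), max 0 (|x| - s) = ∫ x in s..(1/2), (x - s) := by
    refine intervalIntegral.integral_congr fun x hx => ?_
    rw [Set.uIcc_of_le hs] at hx
    rw [abs_of_nonneg (by linarith [hx.1]), max_eq_right (by linarith [hx.1])]
  rw [h₁, h₂, h₃, intervalIntegral.integral_neg, intervalIntegral.integral_zero,
    intervalIntegral.integral_add intervalIntegral.intervalIntegrable_id intervalIntegrable_const,
    intervalIntegral.integral_sub intervalIntegral.intervalIntegrable_id intervalIntegrable_const,
    integral_id, integral_id, intervalIntegral.integral_const, intervalIntegral.integral_const,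
    smul_eq_mul, smul_eq_mul]
  ring

lemma UnitAddCircle.integral_max_zero_norm_sub {s : ℝ} (hs₀ : 0 ≤ s) (hs : s ≤ 1 / 2) :
    ∫ y : UnitAddCircle, max 0 (‖y‖ - s) = (1 / 2 - s) ^ 2 := by
  rw [← UnitAddCircle.intervalIntegral_preimage (-1/2), ← integral_max_zero_abs_sub hs₀ hs]
  norm_num
  refine intervalIntegral.integral_congr fun x hx => ?_
  rw [Set.uIcc_of_le (by norm_num)] at hx
  rw [(AddCircle.norm_coe_eq_abs_iff 1 one_ne_zero).2 (by simpa [abs_le] using hx)]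

lemma integral_le_wassersteinDist_one {ν₀ ν₁ : Measure UnitAddCircle} [IsProbabilityMeasure ν₀]
    [IsProbabilityMeasure ν₁] {φ : UnitAddCircle → ℝ} (hφ : Continuous φ)
    (hle : ∀ᵐ x ∂ν₀, ∀ y, φ y ≤ dist x y) :
    ∫ y, φ y ∂ν₁ ≤ wassersteinDist 1 ν₀ ν₁ := by
  refine le_csInf ⟨_, ν₀.prod ν₁, ⟨by simp, by simp⟩, rfl⟩ ?_
  rintro _ ⟨ρ, ⟨hρ₀, hρ₁⟩, rfl⟩
  have : IsProbabilityMeasure ρ :=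
    (Measure.isProbabilityMeasure_map_iff measurable_fst.aemeasurable).1 (hρ₀ ▸ ‹_›)
  have hφ₂ : Continuous fun z : UnitAddCircle × UnitAddCircle => φ z.2 := hφ.comp continuous_snd
  simp only [Real.rpow_one, div_one]
  calc ∫ y, φ y ∂ν₁ = ∫ z, φ z.2 ∂ρ := by
        rw [← hρ₁, integral_map measurable_snd.aemeasurable hφ.aestronglyMeasurable]
    _ ≤ ∫ z, dist z.1 z.2 ∂ρ :=
      integral_mono_ae (hφ₂.integrable_of_hasCompactSupport (.of_compactSpace _))
        (continuous_dist.integrable_of_hasCompactSupport (.of_compactSpace _))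
        (ae_of_ae_map measurable_fst.aemeasurable (hρ₀ ▸ hle) |>.mono fun z hz => hz z.2)

lemma max_zero_norm_nsmul_sub_div_le_dist {E : Type*} [SeminormedAddCommGroup E] {n : ℕ}
    (hn : 0 < n) {s : ℝ} {x : E} (hx : ‖n • x‖ ≤ s) (y : E) :
    max 0 (‖n • y‖ - s) / n ≤ dist x y := by
  have hdist : ‖n • y‖ - ‖n • x‖ ≤ n * dist x y :=
    calc ‖n • y‖ - ‖n • x‖ ≤ ‖n • (y - x)‖ := smul_sub n y x ▸ norm_sub_norm_le _ _
      _ ≤ n * ‖y - x‖ := norm_nsmul_le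
      _ = n * dist x y := by rw [dist_comm, dist_eq_norm]
  rw [div_le_iff₀ (by positivity), mul_comm]
  exact max_le (by positivity) (by linarith)

lemma norm_nsmul_coe_intCast_mul_le (q : ℕ) (j : ℤ) (α : ℝ) :
    ‖q • ((j * α : ℝ) : UnitAddCircle)‖ ≤ |j| * torusNorm (q * α) := by
  have : q • ((j * α : ℝ) : UnitAddCircle) = j • ((q * α : ℝ) : UnitAddCircle) := by
    rw [← AddCircle.coe_nsmul, ← AddCircle.coe_zsmul, nsmul_eq_mul, zsmul_eq_mul]
    ring_nf
  rw [this, Int.cast_abs, ← Int.norm_eq_abs]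
  exact norm_zsmul_le _ _

theorem wasserstein_lower_bound_orbit_support_general (α : ℝ)
    (γ C : ℝ) (hC : 0 < C)
    (q : ℕ) (hq : 0 < q) (happrox : torusNorm ((q : ℝ) * α) ≤ C * (q : ℝ) ^ (-γ))
    (ν : Measure UnitAddCircle) [IsProbabilityMeasure ν]
    (hsupp : ν ({x : UnitAddCircle | ∃ j : ℤ, |j| ≤ ⌊(q : ℝ) ^ γ / (3 * C)⌋ ∧
      x = (((j : ℝ) * α : ℝ) : UnitAddCircle)}ᶜ) = 0) :
    1 / (36 * (q : ℝ)) ≤ wassersteinDist 1 ν volume := by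
  set K := ⌊(q : ℝ) ^ γ / (3 * C)⌋
  have hq' : (0 : ℝ) < q := Nat.cast_pos.2 hq
  have hK : (K : ℝ) * torusNorm (q * α) ≤ 1 / 3 :=
    calc (K : ℝ) * torusNorm (q * α) ≤ (q : ℝ) ^ γ / (3 * C) * (C * (q : ℝ) ^ (-γ)) :=
          mul_le_mul (Int.floor_le _) happrox (norm_nonneg _) (by positivity)
      _ = 1 / 3 := by
          rw [Real.rpow_neg hq'.le]
          field_simp
  have horbit : ∀ᵐ x ∂ν, ‖q • x‖ ≤ 1 / 3 := by
    filter_upwards [ae_iff.2 hsupp] with x ⟨j, hj, hx⟩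
    calc ‖q • x‖ ≤ |j| * torusNorm (q * α) := hx ▸ norm_nsmul_coe_intCast_mul_le q j α
      _ ≤ K * torusNorm (q * α) := by gcongr; exact norm_nonneg _
      _ ≤ 1 / 3 := hK
  calc 1 / (36 * (q : ℝ)) = ∫ y, max 0 (‖q • y‖ - 1 / 3) / q := by
        rw [integral_div,
          integral_comp_nsmul volume hq.ne' (f := fun y => max 0 (‖y‖ - 1 / 3)) (by fun_prop),
          UnitAddCircle.integral_max_zero_norm_sub (by norm_num) (by norm_num)]
        field_simp
        norm_num
    _ ≤ wassersteinDist 1 ν volume :=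
        integral_le_wassersteinDist_one (by fun_prop)
          (horbit.mono fun x hx y => max_zero_norm_nsmul_sub_div_le_dist hq hx y)

/-- Lemma 5.4 of the paper: if `‖qα‖ ≤ C q^{-γ}` and `ν` is supported in
`{ {jα} : |j| ≤ ⌊q^γ/(3C)⌋ }`, then `W₁(ν, μ) ≥ 1/(36q)`. -/
theorem wasserstein_lower_bound_orbit_support (α : ℝ) (hα : Irrational α)
    (γ C : ℝ) (hγ : 1 ≤ γ) (hC : 0 < C)
    (q : ℕ) (hq : 0 < q) (happrox : torusNorm ((q : ℝ) * α) ≤ C * (q : ℝ) ^ (-γ))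
    (ν : Measure UnitAddCircle) [IsProbabilityMeasure ν]
    (hsupp : ν ({x : UnitAddCircle | ∃ j : ℤ, |j| ≤ ⌊(q : ℝ) ^ γ / (3 * C)⌋ ∧
      x = (((j : ℝ) * α : ℝ) : UnitAddCircle)}ᶜ) = 0) :
    1 / (36 * (q : ℝ)) ≤ wassersteinDist 1 ν volume :=
  wasserstein_lower_bound_orbit_support_general α γ C hC q hq happrox ν hsupp
end
end

section
/- Let α be an irrational number such that ‖qα‖ ≥ C q^{−γ} for all positive integers q, with constants γ ≥ 1 and C > 0. Let θ > 1 and τ > 0 satisfy θ = γτ. Then there exists a constant C' > 0 such that for all ε ∈ (0, 1/2): Σ_{m∈ℤ, m≠0} e^{−m²ε} / ( |m|^θ ‖mα‖^τ ) ≤ C' log(ε^{−1}). -/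
/-!
On a block `N ≤ n < 2N`, two integers with `‖nα‖ ≤ t` differ by some `q` with `‖qα‖ ≤ 2t`, hence
by at least `(C / 2t)^{1/γ}`; so at most about `N t^{1/γ}` of them satisfy `‖nα‖ ≤ t`. Read
backwards, the `r`-th smallest value of `‖nα‖` on the block is at least a constant times
`(r / N)^γ`, so the block contributes `O(N^θ ∑_r r^{-θ}) = O(N^θ)` to `∑ ‖nα‖^{-τ}`, because
`θ = γτ > 1`. With the weights `e^{-n²ε} / n^θ`, the `k`-th dyadic block therefore contributes
`O(e^{-4^k ε})`, and `∑_k e^{-4^k ε} = O(log ε⁻¹)`: about `log₂ ε⁻¹` terms are at most `1`, and the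
later ones decay geometrically.
-/

open MeasureTheory ProbabilityTheory Filter Finset Real
open scoped ENNReal

noncomputable section

lemma torusNorm_neg (x : ℝ) : torusNorm (-x) = torusNorm x := by
  rw [torusNorm, AddCircle.coe_neg, norm_neg, torusNorm]

lemma torusNorm_sub_le (x y : ℝ) : torusNorm (x - y) ≤ torusNorm x + torusNorm y := by
  rw [torusNorm, AddCircle.coe_sub]
  exact norm_sub_le _ _

lemma torusNorm_natAbs_mul (m : ℤ) (α : ℝ) :
    torusNorm ((m.natAbs : ℝ) * α) = torusNorm ((m : ℝ) * α) := by
  rw [Nat.cast_natAbs, Int.cast_abs]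
  rcases abs_choice (m : ℝ) with h | h <;> rw [h]
  rw [neg_mul, torusNorm_neg]

lemma Finset.card_le_div_add_one_of_le_sub {s : Finset ℕ} {a N : ℕ} {D : ℝ} (hD : 0 < D)
    (hs : s ⊆ Ico a (a + N)) (hsep : ∀ m ∈ s, ∀ n ∈ s, m < n → D ≤ (n : ℝ) - m) :
    (#s : ℝ) ≤ N / D + 1 := by
  set d := ⌈D⌉₊
  have hd : 0 < d := Nat.ceil_pos.mpr hD
  have hmono : StrictMonoOn (fun n => (n - a) / d) s := by
    intro m hm n hn hmn
    have hmn' : d ≤ n - m := by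
      rw [Nat.ceil_le, Nat.cast_sub hmn.le]
      exact hsep m hm n hn hmn
    have ha : a ≤ m := (mem_Ico.mp (hs hm)).1
    calc (m - a) / d < (m - a) / d + 1 := Nat.lt_succ_self _
      _ = (m - a + d) / d := (Nat.add_div_right _ hd).symm
      _ ≤ (n - a) / d := Nat.div_le_div_right (by omega)
  have hmaps : ∀ n ∈ s, (n - a) / d ∈ range (N / d + 1) := fun n hn => by
    have := mem_Ico.mp (hs hn)
    exact mem_range.mpr (Nat.lt_succ_of_le (Nat.div_le_div_right (by omega)))
  have hcard : #s ≤ N / d + 1 := by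
    simpa using card_le_card_of_injOn _ hmaps hmono.injOn
  calc (#s : ℝ) ≤ ((N / d : ℕ) : ℝ) + 1 := by exact_mod_cast hcard
    _ ≤ N / d + 1 := by gcongr; exact Nat.cast_div_le
    _ ≤ N / D + 1 := by gcongr; exact Nat.le_ceil D

lemma Finset.sum_rank_le_sum_range {ι β M : Type*} [DecidableEq ι] [LinearOrder β]
    [AddCommMonoid M] [PartialOrder M] [IsOrderedAddMonoid M]
    (s : Finset ι) (f : ι → β) {ψ : ℕ → M} (hψ : AntitoneOn ψ (Set.Ici 1)) :
    ∑ n ∈ s, ψ #{m ∈ s | f m ≤ f n} ≤ ∑ i ∈ range #s, ψ (i + 1) := by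
  induction s using Finset.induction_on_max_value f with
  | empty => simp
  | insert a s has hmax ih =>
    -- Adding `a` raises the other ranks, which `ψ` turns into smaller terms; this is also why
    -- ties are harmless.
    have hrank_le : ∀ n ∈ s, ψ #{m ∈ insert a s | f m ≤ f n} ≤ ψ #{m ∈ s | f m ≤ f n} := by
      intro n hn
      have hpos : 1 ≤ #{m ∈ s | f m ≤ f n} := card_pos.mpr ⟨n, mem_filter.mpr ⟨hn, le_rfl⟩⟩
      exact hψ hpos (hpos.trans (card_le_card (filter_subset_filter _ (subset_insert a s))))
        (card_le_card (filter_subset_filter _ (subset_insert a s)))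
    have hrank_a : #{m ∈ insert a s | f m ≤ f a} = #s + 1 := by
      rw [filter_true_of_mem, card_insert_of_notMem has]
      intro m hm
      rcases mem_insert.mp hm with rfl | hm
      exacts [le_rfl, hmax m hm]
    rw [sum_insert has, hrank_a, card_insert_of_notMem has, sum_range_succ, add_comm]
    exact add_le_add_left ((sum_le_sum hrank_le).trans ih) _

lemma sum_range_natCast_succ_rpow_neg_le_tsum {p : ℝ} (hp : 1 < p) (M : ℕ) :
    ∑ i ∈ range M, ((i + 1 : ℕ) : ℝ) ^ (-p) ≤ ∑' n : ℕ, (n : ℝ) ^ (-p) :=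
  calc ∑ i ∈ range M, ((i + 1 : ℕ) : ℝ) ^ (-p)
      ≤ ∑ i ∈ range M, ((i + 1 : ℕ) : ℝ) ^ (-p) + ((0 : ℕ) : ℝ) ^ (-p) :=
        le_add_of_nonneg_right (Real.rpow_nonneg (Nat.cast_nonneg 0) _)
    _ = ∑ i ∈ range (M + 1), (i : ℝ) ^ (-p) := by rw [sum_range_succ']
    _ ≤ ∑' n : ℕ, (n : ℝ) ^ (-p) :=
        (Real.summable_nat_rpow.mpr (by linarith)).sum_le_tsum _
          fun n _ => Real.rpow_nonneg n.cast_nonneg _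

lemma sum_range_exp_neg_four_pow_mul_le_two {c : ℝ} (hc : 1 ≤ c) (M : ℕ) :
    ∑ j ∈ range M, exp (-(4 : ℝ) ^ j * c) ≤ 2 := by
  have hterm : ∀ j : ℕ, exp (-(4 : ℝ) ^ j * c) ≤ (1 / 2) ^ j := fun j =>
    calc exp (-(4 : ℝ) ^ j * c) = (exp ((4 : ℝ) ^ j * c))⁻¹ := by rw [neg_mul, exp_neg]
      _ ≤ ((2 : ℝ) ^ j)⁻¹ := by
          refine inv_anti₀ (by positivity) ?_
          calc (2 : ℝ) ^ j ≤ (4 : ℝ) ^ j := pow_le_pow_left₀ zero_le_two (by norm_num) _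
            _ ≤ (4 : ℝ) ^ j * c := le_mul_of_one_le_right (by positivity) hc
            _ ≤ exp ((4 : ℝ) ^ j * c) := by linarith [add_one_le_exp ((4 : ℝ) ^ j * c)]
      _ = (1 / 2) ^ j := by rw [one_div, inv_pow]
  exact (sum_le_sum fun j _ => hterm j).trans (sum_geometric_two_le M)

lemma sum_range_exp_neg_four_pow_mul_le {ε : ℝ} (hε : 0 < ε) (hε2 : ε < 1 / 2) (M : ℕ) :
    ∑ k ∈ range M, exp (-(4 : ℝ) ^ k * ε) ≤ 4 / log 2 * log ε⁻¹ := by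
  set L := log ε⁻¹
  have hlog2 : 0 < log 2 := log_pos one_lt_two
  have hL : log 2 < L := log_lt_log two_pos (by rw [lt_inv_comm₀ two_pos hε]; linarith)
  set k₀ := ⌈L / log 2⌉₊
  have hk₀ : (k₀ : ℝ) < L / log 2 + 1 := Nat.ceil_lt_add_one (div_pos (hlog2.trans hL) hlog2).le
  have hscale : 1 ≤ (4 : ℝ) ^ k₀ * ε := by
    have hL_le : L ≤ k₀ * log 2 := (div_le_iff₀ hlog2).mp (Nat.le_ceil _)
    have : ε⁻¹ ≤ (4 : ℝ) ^ k₀ :=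
      calc ε⁻¹ = exp L := (exp_log (by positivity)).symm
        _ ≤ exp (k₀ * log 2) := exp_le_exp.mpr hL_le
        _ = (2 : ℝ) ^ k₀ := by rw [exp_nat_mul, exp_log two_pos]
        _ ≤ (4 : ℝ) ^ k₀ := pow_le_pow_left₀ zero_le_two (by norm_num) _
    rwa [inv_le_iff_one_le_mul₀ hε] at this
  calc ∑ k ∈ range M, exp (-(4 : ℝ) ^ k * ε)
      ≤ ∑ k ∈ range (k₀ + M), exp (-(4 : ℝ) ^ k * ε) :=
        sum_le_sum_of_subset_of_nonneg (range_subset_range.mpr (by omega))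
          fun _ _ _ => (exp_pos _).le
    _ = ∑ k ∈ range k₀, exp (-(4 : ℝ) ^ k * ε) +
          ∑ j ∈ range M, exp (-(4 : ℝ) ^ j * ((4 : ℝ) ^ k₀ * ε)) := by
        rw [sum_range_add]
        congr! 3 with j
        ring
    _ ≤ ∑ k ∈ range k₀, 1 + 2 := by
        gcongr with k
        · exact exp_le_one_iff.mpr (by nlinarith [pow_pos (four_pos : (0 : ℝ) < 4) k])
        · exact sum_range_exp_neg_four_pow_mul_le_two hscale M
    _ ≤ 4 / log 2 * L := by
        have : 1 < L / log 2 := (one_lt_div hlog2).mpr hL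
        rw [sum_const, card_range, nsmul_one, div_mul_eq_mul_div, mul_div_assoc]
        linarith

lemma sum_le_of_sum_Ico_two_pow_le {g b : ℕ → ℝ} (hb : ∀ k, 0 ≤ b k)
    (hblock : ∀ k, ∀ s ⊆ Ico (2 ^ k) (2 ^ (k + 1)), ∑ n ∈ s, g n ≤ b k)
    {B : ℝ} (hB : ∀ K, ∑ k ∈ range K, b k ≤ B) {u : Finset ℕ} (hu : 0 ∉ u) :
    ∑ n ∈ u, g n ≤ B := by
  obtain ⟨K, hK⟩ := exists_nat_subset_range (u.image (Nat.log 2))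
  calc ∑ n ∈ u, g n = ∑ k ∈ u.image (Nat.log 2), ∑ n ∈ u with Nat.log 2 n = k, g n :=
        (sum_fiberwise_of_maps_to (fun n hn => mem_image_of_mem _ hn) g).symm
    _ ≤ ∑ k ∈ u.image (Nat.log 2), b k := by
        refine sum_le_sum fun k _ => hblock k _ fun n hn => ?_
        obtain ⟨hnu, rfl⟩ := mem_filter.mp hn
        have hn0 : n ≠ 0 := fun h => hu (h ▸ hnu)
        exact mem_Ico.mpr ⟨Nat.pow_log_le_self 2 hn0, Nat.lt_pow_succ_log_self one_lt_two n⟩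
    _ ≤ ∑ k ∈ range K, b k := sum_le_sum_of_subset_of_nonneg hK fun k _ _ => hb k
    _ ≤ B := hB K

lemma tsum_ne_zero_natAbs_le {g : ℕ → ℝ} {B : ℝ}
    (hB : ∀ u : Finset ℕ, 0 ∉ u → ∑ n ∈ u, g n ≤ B) :
    ∑' m : {m : ℤ // m ≠ 0}, g m.1.natAbs ≤ 2 * B := by
  have hB0 : 0 ≤ B := by simpa using hB ∅ (notMem_empty 0)
  have hside : ∀ t : Finset ℤ, 0 ∉ t → Set.InjOn Int.natAbs t → ∑ m ∈ t, g m.natAbs ≤ B :=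
    fun t ht hinj => (sum_image hinj).symm.trans_le <| hB _ fun h => by
      obtain ⟨m, hm, hm0⟩ := mem_image.mp h
      exact ht (Int.natAbs_eq_zero.mp hm0 ▸ hm)
  refine tsum_le_of_sum_le' (by positivity) fun s => ?_
  set t := s.map (Function.Embedding.subtype _)
  have ht : 0 ∉ t := by simp [t]
  have hst : ∑ m ∈ s, g m.1.natAbs = ∑ m ∈ t, g m.natAbs :=
    (sum_map s (Function.Embedding.subtype _) fun m => g m.natAbs).symm
  rw [hst, ← sum_filter_add_sum_filter_not t (0 < ·), two_mul]
  refine add_le_add (hside _ (fun h => ht (mem_filter.mp h).1) ?_)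
    (hside _ (fun h => ht (mem_filter.mp h).1) ?_)
  all_goals
    intro m hm n hn hmn
    simp only [coe_filter, Set.mem_ofPred_eq] at hm hn
    omega

def IsDiophantine (α C γ : ℝ) : Prop :=
  ∀ q : ℕ, 0 < q → C * (q : ℝ) ^ (-γ) ≤ torusNorm ((q : ℝ) * α)

section Diophantine

variable {α C γ : ℝ}

lemma torusNorm_pos_of_diophantine (hC : 0 < C) (hdio : IsDiophantine α C γ)
    {n : ℕ} (hn : 0 < n) : 0 < torusNorm ((n : ℝ) * α) :=
  (mul_pos hC (Real.rpow_pos_of_pos (Nat.cast_pos.mpr hn) _)).trans_le (hdio n hn)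

lemma le_sub_of_torusNorm_le (hC : 0 < C) (hγ : 0 < γ) (hdio : IsDiophantine α C γ)
    {m n : ℕ} (hmn : m < n) {t : ℝ} (ht : 0 < t)
    (hm : torusNorm ((m : ℝ) * α) ≤ t) (hn : torusNorm ((n : ℝ) * α) ≤ t) :
    (C / (2 * t)) ^ γ⁻¹ ≤ (n : ℝ) - m := by
  have hq : (0 : ℝ) < (n - m : ℕ) := Nat.cast_pos.mpr (Nat.sub_pos_of_lt hmn)
  have hnear : C * ((n - m : ℕ) : ℝ) ^ (-γ) ≤ 2 * t := by
    refine (hdio _ (Nat.sub_pos_of_lt hmn)).trans ?_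
    rw [Nat.cast_sub hmn.le, sub_mul]
    linarith [torusNorm_sub_le ((n : ℝ) * α) ((m : ℝ) * α)]
  rw [← Nat.cast_sub hmn.le, Real.rpow_inv_le_iff_of_pos (by positivity) hq.le hγ,
    div_le_iff₀ (by positivity)]
  rw [Real.rpow_neg hq.le, ← div_eq_mul_inv, div_le_iff₀ (by positivity)] at hnear
  linarith

lemma card_le_of_torusNorm_le (hC : 0 < C) (hγ : 0 < γ) (hdio : IsDiophantine α C γ)
    {s : Finset ℕ} {a N : ℕ} (hs : s ⊆ Ico a (a + N)) {t : ℝ} (ht : 0 < t)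
    (hst : ∀ n ∈ s, torusNorm ((n : ℝ) * α) ≤ t) :
    (#s : ℝ) ≤ N * (2 * t / C) ^ γ⁻¹ + 1 := by
  have := Finset.card_le_div_add_one_of_le_sub (by positivity) hs
    fun m hm n hn hmn => le_sub_of_torusNorm_le hC hγ hdio hmn ht (hst m hm) (hst n hn)
  rwa [div_eq_mul_inv, ← Real.inv_rpow (by positivity), inv_div] at this

lemma inv_two_mul_le_rpow_inv_of_diophantine (hC : 0 < C) (hγ : 0 < γ)
    (hdio : IsDiophantine α C γ) {N n : ℕ} (hn0 : 0 < n) (hn : n < 2 * N) :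
    (2 * N : ℝ)⁻¹ ≤ (2 * torusNorm ((n : ℝ) * α) / C) ^ γ⁻¹ := by
  have h2N : (0 : ℝ) < 2 * N := by exact_mod_cast (show 0 < 2 * N by omega)
  have ht := torusNorm_pos_of_diophantine hC hdio hn0
  have hlow : C * (2 * N : ℝ) ^ (-γ) ≤ torusNorm ((n : ℝ) * α) :=
    (mul_le_mul_of_nonneg_left (Real.rpow_le_rpow_of_nonpos (Nat.cast_pos.mpr hn0)
      (by exact_mod_cast hn.le) (neg_nonpos.mpr hγ.le)) hC.le).trans (hdio n hn0)
  rw [Real.le_rpow_inv_iff_of_pos (by positivity) (by positivity) hγ, Real.inv_rpow h2N.le,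
    ← Real.rpow_neg h2N.le, le_div_iff₀ hC]
  nlinarith [Real.rpow_pos_of_pos h2N (-γ)]

lemma torusNorm_rpow_neg_le_rank (hC : 0 < C) (hγ : 0 < γ) (hdio : IsDiophantine α C γ)
    {τ : ℝ} (hτ : 0 < τ) {N : ℕ} {s : Finset ℕ} (hs : s ⊆ Ico N (2 * N)) {n : ℕ} (hn : n ∈ s) :
    torusNorm ((n : ℝ) * α) ^ (-τ) ≤
      (2 / C) ^ τ * (3 * N : ℝ) ^ (γ * τ) *
        (#{m ∈ s | torusNorm ((m : ℕ) * α) ≤ torusNorm (n * α)} : ℝ) ^ (-(γ * τ)) := by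
  set t := torusNorm ((n : ℝ) * α)
  set r := #{m ∈ s | torusNorm ((m : ℕ) * α) ≤ t}
  obtain ⟨hNn, hn2N⟩ := mem_Ico.mp (hs hn)
  have hn0 : 0 < n := by omega
  have hN : (0 : ℝ) < N := by exact_mod_cast (show 0 < N by omega)
  have ht : 0 < t := torusNorm_pos_of_diophantine hC hdio hn0
  set x := (2 * t / C) ^ γ⁻¹
  have hx : 0 < x := by positivity
  have hr : (1 : ℝ) ≤ r := Nat.one_le_cast.mpr (card_pos.mpr ⟨n, mem_filter.mpr ⟨hn, le_rfl⟩⟩)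
  have hcount : (r : ℝ) ≤ N * x + 1 :=
    card_le_of_torusNorm_le hC hγ hdio ((filter_subset _ s).trans (by rwa [two_mul] at hs)) ht
      fun m hm => (mem_filter.mp hm).2
  have hNx : 1 ≤ 2 * N * x := by
    rw [← div_le_iff₀' (by positivity), one_div]
    exact inv_two_mul_le_rpow_inv_of_diophantine hC hγ hdio hn0 hn2N
  have hr0 : (0 : ℝ) < r := by linarith
  have h3N : (0 : ℝ) < 3 * N := by positivity
  have hrx : (r : ℝ) / (3 * N) ≤ x := by
    rw [div_le_iff₀ h3N]
    linarith
  have ht_eq : t = C / 2 * x ^ γ := by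
    rw [← Real.rpow_mul (by positivity), inv_mul_cancel₀ hγ.ne', Real.rpow_one]
    field_simp
  calc t ^ (-τ) = (2 / C) ^ τ * x ^ (-(γ * τ)) := by
        rw [ht_eq, Real.mul_rpow (by positivity) (by positivity), ← Real.rpow_mul hx.le,
          Real.rpow_neg (by positivity), ← Real.inv_rpow (by positivity), inv_div, mul_neg]
    _ ≤ (2 / C) ^ τ * ((r : ℝ) / (3 * N)) ^ (-(γ * τ)) :=
        mul_le_mul_of_nonneg_left (Real.rpow_le_rpow_of_nonpos (div_pos hr0 h3N) hrx
          (neg_nonpos.mpr (mul_pos hγ hτ).le)) (by positivity)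
    _ = (2 / C) ^ τ * (3 * N : ℝ) ^ (γ * τ) * (r : ℝ) ^ (-(γ * τ)) := by
        rw [Real.rpow_neg (div_pos hr0 h3N).le, Real.div_rpow hr0.le h3N.le, inv_div,
          Real.rpow_neg hr0.le]
        ring

lemma sum_torusNorm_rpow_neg_le (hC : 0 < C) (hγ : 0 < γ) (hdio : IsDiophantine α C γ)
    {τ : ℝ} (hτ : 0 < τ) (hθ : 1 < γ * τ) {N : ℕ} {s : Finset ℕ} (hs : s ⊆ Ico N (2 * N)) :
    ∑ n ∈ s, torusNorm ((n : ℝ) * α) ^ (-τ) ≤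
      (2 / C) ^ τ * (3 * N : ℝ) ^ (γ * τ) * ∑' n : ℕ, (n : ℝ) ^ (-(γ * τ)) := by
  set K := (2 / C) ^ τ * (3 * N : ℝ) ^ (γ * τ)
  have hψ : AntitoneOn (fun i : ℕ => K * (i : ℝ) ^ (-(γ * τ))) (Set.Ici 1) :=
    fun i hi j _ hij => mul_le_mul_of_nonneg_left
      (Real.rpow_le_rpow_of_nonpos (Nat.cast_pos.mpr hi) (Nat.cast_le.mpr hij) (by linarith))
      (by positivity)
  calc ∑ n ∈ s, torusNorm ((n : ℝ) * α) ^ (-τ)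
      ≤ ∑ n ∈ s, K * (#{m ∈ s | torusNorm ((m : ℕ) * α) ≤ torusNorm (n * α)} : ℝ) ^ (-(γ * τ)) :=
        sum_le_sum fun n hn => torusNorm_rpow_neg_le_rank hC hγ hdio hτ hs hn
    _ ≤ ∑ i ∈ range #s, K * ((i + 1 : ℕ) : ℝ) ^ (-(γ * τ)) :=
        sum_rank_le_sum_range s (fun m : ℕ => torusNorm (m * α)) hψ
    _ ≤ K * ∑' n : ℕ, (n : ℝ) ^ (-(γ * τ)) := by
        rw [← mul_sum]
        exact mul_le_mul_of_nonneg_left (sum_range_natCast_succ_rpow_neg_le_tsum hθ _)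
          (by positivity)

lemma sum_exp_div_rpow_mul_torusNorm_rpow_le (hC : 0 < C) (hγ : 0 < γ) (hdio : IsDiophantine α C γ)
    {τ : ℝ} (hτ : 0 < τ) (hθ : 1 < γ * τ) {ε : ℝ} (hε : 0 ≤ ε)
    {N : ℕ} (hN : 0 < N) {s : Finset ℕ} (hs : s ⊆ Ico N (2 * N)) :
    ∑ n ∈ s, exp (-(n : ℝ) ^ 2 * ε) / ((n : ℝ) ^ (γ * τ) * torusNorm ((n : ℝ) * α) ^ τ) ≤
      exp (-(N : ℝ) ^ 2 * ε) *
        ((2 / C) ^ τ * 3 ^ (γ * τ) * ∑' n : ℕ, (n : ℝ) ^ (-(γ * τ))) := by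
  have hN' : (0 : ℝ) < N := Nat.cast_pos.mpr hN
  have hterm : ∀ n ∈ s, exp (-(n : ℝ) ^ 2 * ε) / ((n : ℝ) ^ (γ * τ) * torusNorm ((n : ℝ) * α) ^ τ) ≤
      exp (-(N : ℝ) ^ 2 * ε) * ((N : ℝ) ^ (γ * τ))⁻¹ * torusNorm ((n : ℝ) * α) ^ (-τ) := by
    intro n hn
    have hNn : (N : ℝ) ≤ n := Nat.cast_le.mpr (mem_Ico.mp (hs hn)).1
    have ht := torusNorm_pos_of_diophantine hC hdio (hN.trans_le (by exact_mod_cast hNn))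
    rw [div_eq_mul_inv, mul_inv, ← mul_assoc, ← Real.rpow_neg ht.le]
    have := Real.rpow_pos_of_pos ht (-τ)
    gcongr
  calc _ ≤ ∑ n ∈ s, exp (-(N : ℝ) ^ 2 * ε) * ((N : ℝ) ^ (γ * τ))⁻¹ *
        torusNorm ((n : ℝ) * α) ^ (-τ) := sum_le_sum hterm
    _ ≤ exp (-(N : ℝ) ^ 2 * ε) * ((N : ℝ) ^ (γ * τ))⁻¹ *
        ((2 / C) ^ τ * (3 * N : ℝ) ^ (γ * τ) * ∑' n : ℕ, (n : ℝ) ^ (-(γ * τ))) := by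
        rw [← mul_sum]
        gcongr
        exact sum_torusNorm_rpow_neg_le hC hγ hdio hτ hθ hs
    _ = _ := by
        rw [Real.mul_rpow (by norm_num) hN'.le]
        field_simp

lemma sum_exp_div_rpow_mul_torusNorm_rpow_le_log (hC : 0 < C) (hγ : 0 < γ)
    (hdio : IsDiophantine α C γ) {τ : ℝ} (hτ : 0 < τ) (hθ : 1 < γ * τ) {ε : ℝ} (hε : 0 < ε)
    (hε2 : ε < 1 / 2) {u : Finset ℕ} (hu : 0 ∉ u) :
    ∑ n ∈ u, exp (-(n : ℝ) ^ 2 * ε) / ((n : ℝ) ^ (γ * τ) * torusNorm ((n : ℝ) * α) ^ τ) ≤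
      (2 / C) ^ τ * 3 ^ (γ * τ) * (∑' n : ℕ, (n : ℝ) ^ (-(γ * τ))) *
        (4 / log 2 * log ε⁻¹) := by
  set K := (2 / C) ^ τ * 3 ^ (γ * τ) * ∑' n : ℕ, (n : ℝ) ^ (-(γ * τ))
  have hK : 0 ≤ K := by
    have : 0 ≤ ∑' n : ℕ, (n : ℝ) ^ (-(γ * τ)) :=
      tsum_nonneg fun n => Real.rpow_nonneg n.cast_nonneg _
    positivity
  refine sum_le_of_sum_Ico_two_pow_le (b := fun k => exp (-(4 : ℝ) ^ k * ε) * K)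
    (fun k => by positivity) (fun k s hs => ?_) (fun M => ?_) hu
  · have h4 : (((2 ^ k : ℕ) : ℝ)) ^ 2 = 4 ^ k := by
      rw [Nat.cast_pow, Nat.cast_ofNat, ← pow_mul, mul_comm, pow_mul]
      norm_num
    simpa only [h4] using sum_exp_div_rpow_mul_torusNorm_rpow_le hC hγ hdio hτ hθ hε.le
      (Nat.two_pow_pos k) (by rwa [← pow_succ'])
  · rw [← sum_mul, mul_comm]
    exact mul_le_mul_of_nonneg_left (sum_range_exp_neg_four_pow_mul_le hε hε2 M) hK

end Diophantine

theorem weighted_diophantine_sum_log_bound_general (α : ℝ)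
    (γ C : ℝ) (hC : 0 < C)
    (hdio : ∀ q : ℕ, 0 < q → C * (q : ℝ) ^ (-γ) ≤ torusNorm ((q : ℝ) * α))
    (θ τ : ℝ) (hθ : 1 < θ) (hτ : 0 < τ) (hθτ : θ = γ * τ) :
    ∃ C' : ℝ, 0 < C' ∧ ∀ ε : ℝ, 0 < ε → ε < 1 / 2 →
      (∑' m : {m : ℤ // m ≠ 0},
          Real.exp (-((m : ℤ) : ℝ) ^ 2 * ε) /
            (|((m : ℤ) : ℝ)| ^ θ * torusNorm (((m : ℤ) : ℝ) * α) ^ τ)) ≤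
        C' * Real.log ε⁻¹ := by
  subst hθτ
  have hγ : 0 < γ := pos_of_mul_pos_left (by linarith) hτ.le
  set Z := ∑' n : ℕ, (n : ℝ) ^ (-(γ * τ))
  have hZ : 0 < Z := (Real.summable_nat_rpow.mpr (by linarith)).tsum_pos
    (fun n => Real.rpow_nonneg n.cast_nonneg _) 1 (by simp)
  set K := (2 / C) ^ τ * 3 ^ (γ * τ) * Z
  have hK : 0 < K := by positivity
  refine ⟨2 * (K * (4 / log 2)), by have := log_pos one_lt_two; positivity, fun ε hε hε2 => ?_⟩
  calc _ = ∑' m : {m : ℤ // m ≠ 0}, exp (-(m.1.natAbs : ℝ) ^ 2 * ε) /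
          ((m.1.natAbs : ℝ) ^ (γ * τ) * torusNorm ((m.1.natAbs : ℝ) * α) ^ τ) :=
        tsum_congr fun m => by rw [torusNorm_natAbs_mul, Nat.cast_natAbs, Int.cast_abs, sq_abs]
    _ ≤ 2 * (K * (4 / log 2 * log ε⁻¹)) := tsum_ne_zero_natAbs_le fun u hu =>
        sum_exp_div_rpow_mul_torusNorm_rpow_le_log hC hγ hdio hτ hθ hε hε2 hu
    _ = 2 * (K * (4 / log 2)) * log ε⁻¹ := by ring

/-- Lemma 5.8 of the paper: if `‖qα‖ ≥ C q^{-γ}` for all `q ≥ 1` and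
`θ = γτ` with `θ > 1`, `τ > 0`, then `∑_{m≠0} e^{-m²ε}/(|m|^θ ‖mα‖^τ) = O(log(1/ε))`. -/
theorem weighted_diophantine_sum_log_bound (α : ℝ) (hα : Irrational α)
    (γ C : ℝ) (hγ : 1 ≤ γ) (hC : 0 < C)
    (hdio : ∀ q : ℕ, 0 < q → C * (q : ℝ) ^ (-γ) ≤ torusNorm ((q : ℝ) * α))
    (θ τ : ℝ) (hθ : 1 < θ) (hτ : 0 < τ) (hθτ : θ = γ * τ) :
    ∃ C' : ℝ, 0 < C' ∧ ∀ ε : ℝ, 0 < ε → ε < 1 / 2 →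
      (∑' m : {m : ℤ // m ≠ 0},
          Real.exp (-((m : ℤ) : ℝ) ^ 2 * ε) /
            (|((m : ℤ) : ℝ)| ^ θ * torusNorm (((m : ℤ) : ℝ) * α) ^ τ)) ≤
        C' * Real.log ε⁻¹ :=
  weighted_diophantine_sum_log_bound_general α γ C hC hdio θ τ hθ hτ hθτ
end
end
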